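/- arXiv:1710.03160 — 6 statements merged into one kernel-verified Lean document; each statement's English description precedes it below -/
import Mathlib

section
/- For every x > 0 and τ ∈ (0,1), J_fwd(x, τ) = inf over c ∈ ℝ of { (1/2)c²τ + (1/(1−τ)) · J_BS(x · e^{−cτ}) }. -/
/-!
A forward path `f` splits at `τ` into a head on `[0, τ]` and a tail on `[τ, 1]`. The tail, run in
unit time and shifted to start at `0`, is admissible for `J_BS` at level `x e^{-f(τ)}`, and its
energy is `1 - τ` times the energy `f` spends on `[τ, 1]`. On the head, Cauchy–Schwarz gives
`∫₀^τ f'² ≥ f(τ)² / τ = c² τ` with `c = f(τ) / τ`, with equality for the line of slope `c`. Hence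
every forward path costs at least `c² τ / 2 + J_BS(x e^{-cτ}) / (1 - τ)` for some `c`, and for
every `c` this cost is approached by gluing the line of slope `c` to near-optimal `J_BS` paths.
-/

open MeasureTheory Set

/-- `IsAC f g` expresses that `f` is absolutely continuous on `[0,1]` with `f 0 = 0`:
`g` is its (integrable) derivative, `g²` is integrable (finite energy), and
`f t = ∫₀ᵗ g(s) ds` on `[0,1]`. -/
def IsAC (f g : ℝ → ℝ) : Prop :=
  IntervalIntegrable g volume 0 1 ∧
  IntervalIntegrable (fun t => (g t) ^ 2) volume 0 1 ∧
  ∀ t ∈ Icc (0:ℝ) 1, f t = ∫ s in (0:ℝ)..t, g s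

/-- The energy `(1/2)∫₀¹ (f'(t))² dt` of a path with derivative `g`. -/
noncomputable def energy (g : ℝ → ℝ) : ℝ :=
  (1 / 2) * ∫ t in (0:ℝ)..1, (g t) ^ 2

/-- The rate function `J_BS(x)` for an Asian option with averaging starting at time `0`
in the Black-Scholes model: the infimum of `(1/2)∫₀¹ (φ'(u))² du` over absolutely
continuous `φ` with `φ(0) = 0` and `∫₀¹ exp(φ(u)) du = x`. -/
noncomputable def JBS (x : ℝ) : ℝ :=
  sInf { E | ∃ f g : ℝ → ℝ, IsAC f g ∧ (∫ u in (0:ℝ)..1, Real.exp (f u)) = x ∧ E = energy g }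

/-- The rate function `J_fwd(x, τ)` for a forward start Asian option in the
Black-Scholes model: the infimum of `(1/2)∫₀¹ (f'(t))² dt` over absolutely continuous
`f` with `f(0) = 0` and `(1/(1-τ))∫_τ¹ exp(f(t)) dt = x`. -/
noncomputable def Jfwd (x τ : ℝ) : ℝ :=
  sInf { E | ∃ f g : ℝ → ℝ, IsAC f g ∧
    (1 / (1 - τ)) * (∫ t in τ..1, Real.exp (f t)) = x ∧ E = energy g }

namespace ForwardAsian

theorem energy_nonneg (g : ℝ → ℝ) : 0 ≤ energy g :=
  mul_nonneg (by norm_num) (intervalIntegral.integral_nonneg zero_le_one fun _ _ => sq_nonneg _)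

theorem sq_intervalIntegral_le {g : ℝ → ℝ} {a b : ℝ} (hab : a ≤ b)
    (hg : IntervalIntegrable g volume a b)
    (hg2 : IntervalIntegrable (fun t => g t ^ 2) volume a b) :
    (∫ t in a..b, g t) ^ 2 ≤ (b - a) * ∫ t in a..b, g t ^ 2 := by
  rcases hab.eq_or_lt with rfl | hab
  · simp
  set I := ∫ t in a..b, g t
  set Q := ∫ t in a..b, g t ^ 2
  have hexpand : ∫ t in a..b, ((b - a) * g t - I) ^ 2 = (b - a) * ((b - a) * Q - I ^ 2) := by
    have hpt : ∀ t, ((b - a) * g t - I) ^ 2 =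
        (b - a) ^ 2 * g t ^ 2 - (2 * (b - a) * I) * g t + I ^ 2 := fun t => by ring
    simp only [hpt]
    rw [intervalIntegral.integral_add ((hg2.const_mul _).sub (hg.const_mul _))
        intervalIntegrable_const,
      intervalIntegral.integral_sub (hg2.const_mul _) (hg.const_mul _),
      intervalIntegral.integral_const_mul, intervalIntegral.integral_const_mul,
      intervalIntegral.integral_const, smul_eq_mul]
    ring
  have hnonneg : 0 ≤ ∫ t in a..b, ((b - a) * g t - I) ^ 2 :=
    intervalIntegral.integral_nonneg hab.le fun _ _ => sq_nonneg _
  rw [hexpand] at hnonneg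
  nlinarith [(mul_nonneg_iff_of_pos_left (sub_pos.2 hab)).1 hnonneg]

theorem intervalIntegrable_of_mem_unitInterval {h : ℝ → ℝ}
    (hh : IntervalIntegrable h volume 0 1) {s t : ℝ} (hs : s ∈ Icc (0:ℝ) 1)
    (ht : t ∈ Icc (0:ℝ) 1) : IntervalIntegrable h volume s t :=
  hh.mono_set (uIcc_subset_uIcc (by rwa [uIcc_of_le zero_le_one]) (by rwa [uIcc_of_le zero_le_one]))

section Infima

variable {f g : ℝ → ℝ} {x y τ a : ℝ}

theorem JBS_nonneg (y : ℝ) : 0 ≤ JBS y :=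
  Real.sInf_nonneg (by rintro _ ⟨_, g, -, -, rfl⟩; exact energy_nonneg g)

theorem JBS_le_energy (hfg : IsAC f g) :
    JBS (∫ u in (0:ℝ)..1, Real.exp (f u)) ≤ energy g :=
  csInf_le ⟨0, by rintro _ ⟨_, g, -, -, rfl⟩; exact energy_nonneg g⟩ ⟨f, g, hfg, rfl, rfl⟩

theorem le_JBS (hne : ∃ f g, IsAC f g ∧ ∫ u in (0:ℝ)..1, Real.exp (f u) = y)
    (h : ∀ f g, IsAC f g → ∫ u in (0:ℝ)..1, Real.exp (f u) = y → a ≤ energy g) : a ≤ JBS y := by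
  obtain ⟨f, g, hfg, hf⟩ := hne
  exact le_csInf ⟨_, f, g, hfg, hf, rfl⟩ (by rintro _ ⟨f, g, hfg, hf, rfl⟩; exact h f g hfg hf)

theorem Jfwd_le_energy (hfg : IsAC f g)
    (hf : (1 / (1 - τ)) * (∫ t in τ..1, Real.exp (f t)) = x) : Jfwd x τ ≤ energy g :=
  csInf_le ⟨0, by rintro _ ⟨_, g, -, -, rfl⟩; exact energy_nonneg g⟩ ⟨f, g, hfg, hf, rfl⟩

theorem le_Jfwd (hne : ∃ f g, IsAC f g ∧ (1 / (1 - τ)) * (∫ t in τ..1, Real.exp (f t)) = x)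
    (h : ∀ f g, IsAC f g → (1 / (1 - τ)) * (∫ t in τ..1, Real.exp (f t)) = x → a ≤ energy g) :
    a ≤ Jfwd x τ := by
  obtain ⟨f, g, hfg, hf⟩ := hne
  exact le_csInf ⟨_, f, g, hfg, hf, rfl⟩ (by rintro _ ⟨f, g, hfg, hf, rfl⟩; exact h f g hfg hf)

end Infima

theorem isAC_const_mul_id (b : ℝ) : IsAC (fun u => b * u) (fun _ => b) :=
  ⟨intervalIntegrable_const, intervalIntegrable_const, fun t _ => by simp [mul_comm]⟩

theorem integral_exp_const_mul (b : ℝ) (hb : b ≠ 0) :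
    ∫ u in (0:ℝ)..1, Real.exp (b * u) = (Real.exp b - 1) / b := by
  rw [intervalIntegral.integral_comp_mul_left Real.exp hb, integral_exp, smul_eq_mul]
  field_simp
  simp

theorem exists_integral_exp_const_mul_eq {y : ℝ} (hy : 0 < y) :
    ∃ b : ℝ, ∫ u in (0:ℝ)..1, Real.exp (b * u) = y := by
  set H : ℝ → ℝ := fun b => ∫ u in (0:ℝ)..1, Real.exp (b * u)
  have hH : Continuous H := by fun_prop
  have hlow : H (-(1 / y)) ≤ y := by
    have hb : -(1 / y) < 0 := by simp [hy]
    simp only [H]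
    rw [integral_exp_const_mul _ hb.ne, div_le_iff_of_neg hb]
    field_simp
    linarith [Real.exp_pos (-(1 / y))]
  have hhigh : y ≤ H (2 * y) := by
    have hb : 0 < 2 * y := by positivity
    simp only [H]
    rw [integral_exp_const_mul _ hb.ne', le_div_iff₀ hb]
    nlinarith [Real.quadratic_le_exp_of_nonneg hb.le]
  exact intermediate_value_univ _ _ hH ⟨hlow, hhigh⟩

theorem exists_isAC_integral_exp_eq {y : ℝ} (hy : 0 < y) :
    ∃ f g, IsAC f g ∧ ∫ u in (0:ℝ)..1, Real.exp (f u) = y := by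
  obtain ⟨b, hb⟩ := exists_integral_exp_const_mul_eq hy
  exact ⟨_, _, isAC_const_mul_id b, hb⟩

section Tail

variable {f g ψ : ℝ → ℝ} {τ : ℝ}

/-- If `g` is the derivative of `f`, then `rescaleTail τ g` is the derivative of
`u ↦ f ((1 - τ) * u + τ)`, the restriction of `f` to `[τ, 1]` run in unit time. -/
def rescaleTail (τ : ℝ) (g : ℝ → ℝ) (u : ℝ) : ℝ := (1 - τ) * g ((1 - τ) * u + τ)

theorem integral_rescaleTail (hτ : τ ≠ 1) (g : ℝ → ℝ) (a b : ℝ) :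
    ∫ u in a..b, rescaleTail τ g u = ∫ t in (1 - τ) * a + τ..(1 - τ) * b + τ, g t := by
  have hσ : 1 - τ ≠ 0 := sub_ne_zero.2 hτ.symm
  simp only [rescaleTail]
  rw [intervalIntegral.integral_const_mul, intervalIntegral.integral_comp_mul_add g hσ,
    smul_eq_mul, mul_inv_cancel_left₀ hσ]

theorem intervalIntegrable_rescaleTail (hτ : τ ≠ 1) (hg : IntervalIntegrable g volume τ 1) :
    IntervalIntegrable (rescaleTail τ g) volume 0 1 := by
  have h := (hg.comp_add_right τ).comp_mul_left (c := 1 - τ)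
  rw [sub_self, zero_div, div_self (sub_ne_zero.2 hτ.symm)] at h
  exact h.const_mul (1 - τ)

theorem rescaleTail_sq (τ : ℝ) (g : ℝ → ℝ) (u : ℝ) :
    rescaleTail τ g u ^ 2 = (1 - τ) * rescaleTail τ (fun t => g t ^ 2) u := by
  simp only [rescaleTail]
  ring

theorem IsAC.tail (hfg : IsAC f g) (hτ0 : 0 ≤ τ) (hτ1 : τ < 1) :
    IsAC (fun u => f ((1 - τ) * u + τ) - f τ) (rescaleTail τ g) := by
  obtain ⟨hg, hg2, hf⟩ := hfg
  have hτ : τ ∈ Icc (0:ℝ) 1 := ⟨hτ0, hτ1.le⟩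
  refine ⟨intervalIntegrable_rescaleTail hτ1.ne
      (intervalIntegrable_of_mem_unitInterval hg hτ ⟨zero_le_one, le_rfl⟩), ?_, fun u hu => ?_⟩
  · simpa only [rescaleTail_sq] using (intervalIntegrable_rescaleTail hτ1.ne
      (intervalIntegrable_of_mem_unitInterval hg2 hτ ⟨zero_le_one, le_rfl⟩)).const_mul (1 - τ)
  · have hu' : (1 - τ) * u + τ ∈ Icc (0:ℝ) 1 := ⟨by nlinarith [hu.1], by nlinarith [hu.2]⟩
    have h0 : (0:ℝ) ∈ Icc (0:ℝ) 1 := ⟨le_rfl, zero_le_one⟩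
    dsimp only
    rw [integral_rescaleTail hτ1.ne, mul_zero, zero_add, hf _ hu', hf τ hτ,
      intervalIntegral.integral_interval_sub_left
        (intervalIntegrable_of_mem_unitInterval hg h0 hu')
        (intervalIntegrable_of_mem_unitInterval hg h0 hτ)]

theorem energy_eq_add_energy_rescaleTail (hg2 : IntervalIntegrable (fun t => g t ^ 2) volume 0 1)
    (hτ0 : 0 ≤ τ) (hτ1 : τ < 1) :
    energy g = 1 / 2 * (∫ t in (0:ℝ)..τ, g t ^ 2) + 1 / (1 - τ) * energy (rescaleTail τ g) := by
  have hτ : τ ∈ Icc (0:ℝ) 1 := ⟨hτ0, hτ1.le⟩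
  have hσ : 1 - τ ≠ 0 := sub_ne_zero.2 hτ1.ne'
  simp only [energy, rescaleTail_sq, intervalIntegral.integral_const_mul,
    integral_rescaleTail hτ1.ne, mul_zero, mul_one, zero_add, sub_add_cancel]
  rw [← intervalIntegral.integral_add_adjacent_intervals
    (intervalIntegrable_of_mem_unitInterval hg2 ⟨le_rfl, zero_le_one⟩ hτ)
    (intervalIntegrable_of_mem_unitInterval hg2 hτ ⟨zero_le_one, le_rfl⟩)]
  rw [mul_left_comm (1 / (1 - τ)), ← mul_assoc (1 / (1 - τ)), one_div_mul_cancel hσ, one_mul,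
    mul_add]

theorem one_div_mul_integral_exp_eq (hτ : τ ≠ 1) (f : ℝ → ℝ) :
    1 / (1 - τ) * (∫ t in τ..1, Real.exp (f t)) =
      Real.exp (f τ) * ∫ u in (0:ℝ)..1, Real.exp (f ((1 - τ) * u + τ) - f τ) := by
  have hσ : 1 - τ ≠ 0 := sub_ne_zero.2 hτ.symm
  simp only [Real.exp_sub, intervalIntegral.integral_div,
    intervalIntegral.integral_comp_mul_add (fun t => Real.exp (f t)) hσ, mul_zero, mul_one,
    zero_add, sub_add_cancel, smul_eq_mul]
  field_simp

/-- Speed `c` on `[0, τ]`, followed by the path with derivative `ψ` run in time `1 - τ`. -/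
noncomputable def glueDeriv (τ c : ℝ) (ψ : ℝ → ℝ) (t : ℝ) : ℝ :=
  if t ≤ τ then c else (1 - τ)⁻¹ * ψ ((t - τ) / (1 - τ))

theorem glueDeriv_of_le {c t : ℝ} (ht : t ≤ τ) : glueDeriv τ c ψ t = c := if_pos ht

theorem rescaleTail_glueDeriv (hτ : τ < 1) (c : ℝ) {u : ℝ} (hu : 0 < u) :
    rescaleTail τ (glueDeriv τ c ψ) u = ψ u := by
  have hσ : 0 < 1 - τ := sub_pos.2 hτ
  have hgt : ¬(1 - τ) * u + τ ≤ τ := by simpa using mul_pos hσ hu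
  simp only [rescaleTail, glueDeriv, if_neg hgt, add_sub_cancel_right,
    mul_div_cancel_left₀ _ hσ.ne', mul_inv_cancel_left₀ hσ.ne']

theorem glueDeriv_sq (τ c : ℝ) (ψ : ℝ → ℝ) (t : ℝ) :
    glueDeriv τ c ψ t ^ 2 = glueDeriv τ (c ^ 2) (fun u => (1 - τ)⁻¹ * ψ u ^ 2) t := by
  unfold glueDeriv
  split_ifs <;> ring

theorem intervalIntegrable_glueDeriv (hτ0 : 0 ≤ τ) (hτ1 : τ < 1) (c : ℝ)
    (hψ : IntervalIntegrable ψ volume 0 1) : IntervalIntegrable (glueDeriv τ c ψ) volume 0 1 := by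
  have hhead : IntervalIntegrable (glueDeriv τ c ψ) volume 0 τ :=
    intervalIntegrable_const.congr fun t ht => by
      rw [uIoc_of_le hτ0] at ht
      exact (glueDeriv_of_le ht.2).symm
  have htail : IntervalIntegrable (glueDeriv τ c ψ) volume τ 1 := by
    have h := (hψ.comp_mul_left (c := (1 - τ)⁻¹)).comp_sub_right τ
    rw [zero_div, zero_add, div_inv_eq_mul, one_mul, sub_add_cancel] at h
    refine (h.const_mul (1 - τ)⁻¹).congr fun t ht => ?_
    rw [uIoc_of_le hτ1.le] at ht
    simp only [glueDeriv, if_neg (not_le.2 ht.1), div_eq_inv_mul]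
  exact hhead.trans htail

end Tail

section Decomposition

variable {x τ : ℝ}

theorem exists_forward_path_energy_eq (hτ0 : 0 < τ) (hτ1 : τ < 1) (c : ℝ) {φ ψ : ℝ → ℝ}
    (hφψ : IsAC φ ψ) :
    ∃ f g, IsAC f g ∧
      1 / (1 - τ) * (∫ t in τ..1, Real.exp (f t)) =
        Real.exp (c * τ) * ∫ u in (0:ℝ)..1, Real.exp (φ u) ∧
      energy g = 1 / 2 * c ^ 2 * τ + 1 / (1 - τ) * energy ψ := by
  obtain ⟨hψ, hψ2, hφ⟩ := hφψ
  set g := glueDeriv τ c ψ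
  set f := fun t => ∫ s in (0:ℝ)..t, g s
  have hg2 : IntervalIntegrable (fun t => g t ^ 2) volume 0 1 := by
    simpa only [g, glueDeriv_sq] using
      intervalIntegrable_glueDeriv hτ0.le hτ1 (c ^ 2) (hψ2.const_mul (1 - τ)⁻¹)
  have hfg : IsAC f g := ⟨intervalIntegrable_glueDeriv hτ0.le hτ1 c hψ, hg2, fun _ _ => rfl⟩
  have hhead (F : ℝ → ℝ) : ∫ t in (0:ℝ)..τ, F (g t) = τ * F c := by
    have hconst : EqOn (fun t => F (g t)) (fun _ => F c) (uIcc 0 τ) := fun t ht => by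
      rw [uIcc_of_le hτ0.le] at ht
      simp only [g, glueDeriv_of_le ht.2]
    simp [intervalIntegral.integral_congr hconst]
  have htail (F : ℝ → ℝ) {u : ℝ} (hu : 0 ≤ u) :
      ∫ s in (0:ℝ)..u, F (rescaleTail τ g s) = ∫ s in (0:ℝ)..u, F (ψ s) :=
    intervalIntegral.integral_congr_ae <| ae_of_all _ fun s hs => by
      rw [uIoc_of_le hu] at hs
      rw [rescaleTail_glueDeriv hτ1 c hs.1]
  have hfτ : f τ = c * τ := by simpa [mul_comm] using hhead id
  have hφ_eq : EqOn (fun u => Real.exp (f ((1 - τ) * u + τ) - f τ)) (fun u => Real.exp (φ u))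
      (uIcc 0 1) := fun u hu => by
    rw [uIcc_of_le zero_le_one] at hu
    exact congrArg Real.exp
      (((IsAC.tail hfg hτ0.le hτ1).2.2 u hu).trans ((htail id hu.1).trans (hφ u hu).symm))
  refine ⟨f, g, hfg, ?_, ?_⟩
  · rw [one_div_mul_integral_exp_eq hτ1.ne, intervalIntegral.integral_congr hφ_eq, hfτ]
  · rw [energy_eq_add_energy_rescaleTail hg2 hτ0.le hτ1, hhead (· ^ 2), energy, energy,
      htail (· ^ 2) zero_le_one]
    ring

theorem exists_bs_path_energy_le (hτ0 : 0 < τ) (hτ1 : τ < 1) {f g : ℝ → ℝ} (hfg : IsAC f g) :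
    ∃ c φ ψ, IsAC φ ψ ∧
      1 / (1 - τ) * (∫ t in τ..1, Real.exp (f t)) =
        Real.exp (c * τ) * ∫ u in (0:ℝ)..1, Real.exp (φ u) ∧
      1 / 2 * c ^ 2 * τ + 1 / (1 - τ) * energy ψ ≤ energy g := by
  refine ⟨f τ / τ, _, _, IsAC.tail hfg hτ0.le hτ1, ?_, ?_⟩
  · rw [one_div_mul_integral_exp_eq hτ1.ne, div_mul_cancel₀ _ hτ0.ne']
  · obtain ⟨hg, hg2, hf⟩ := hfg
    have h0 : (0:ℝ) ∈ Icc (0:ℝ) 1 := ⟨le_rfl, zero_le_one⟩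
    have hτ : τ ∈ Icc (0:ℝ) 1 := ⟨hτ0.le, hτ1.le⟩
    have hhead : (f τ / τ) ^ 2 * τ ≤ ∫ t in (0:ℝ)..τ, g t ^ 2 := by
      have hCS := sq_intervalIntegral_le hτ0.le (intervalIntegrable_of_mem_unitInterval hg h0 hτ)
        (intervalIntegrable_of_mem_unitInterval hg2 h0 hτ)
      rw [← hf τ hτ, sub_zero] at hCS
      rw [div_pow, div_mul_eq_mul_div, sq τ, mul_div_mul_right _ _ hτ0.ne', div_le_iff₀ hτ0]
      linarith
    rw [energy_eq_add_energy_rescaleTail hg2 hτ0.le hτ1]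
    linarith

theorem Jfwd_le (hx : 0 < x) (hτ0 : 0 < τ) (hτ1 : τ < 1) (c : ℝ) :
    Jfwd x τ ≤ 1 / 2 * c ^ 2 * τ + 1 / (1 - τ) * JBS (x * Real.exp (-c * τ)) := by
  have hσ : 0 < 1 - τ := sub_pos.2 hτ1
  suffices h : Jfwd x τ - 1 / 2 * c ^ 2 * τ ≤ 1 / (1 - τ) * JBS (x * Real.exp (-c * τ)) by
    linarith
  rw [one_div_mul_eq_div (1 - τ), le_div_iff₀ hσ]
  refine le_JBS (exists_isAC_integral_exp_eq (by positivity)) fun φ ψ hφψ hφ => ?_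
  obtain ⟨f, g, hfg, hf, hE⟩ := exists_forward_path_energy_eq hτ0 hτ1 c hφψ
  have hJ := Jfwd_le_energy hfg (by
    rw [hf, hφ, mul_left_comm, ← Real.exp_add, neg_mul, add_neg_cancel, Real.exp_zero, mul_one])
  rw [hE] at hJ
  rw [← le_div_iff₀ hσ, ← one_div_mul_eq_div (1 - τ)]
  linarith

theorem iInf_le_Jfwd (hx : 0 < x) (hτ0 : 0 < τ) (hτ1 : τ < 1) :
    ⨅ c : ℝ, (1 / 2 * c ^ 2 * τ + 1 / (1 - τ) * JBS (x * Real.exp (-c * τ))) ≤ Jfwd x τ := by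
  have hσ : 0 < 1 - τ := sub_pos.2 hτ1
  have hbdd : BddBelow (range fun c : ℝ => 1 / 2 * c ^ 2 * τ + 1 / (1 - τ) *
      JBS (x * Real.exp (-c * τ))) :=
    ⟨0, by
      rintro _ ⟨c, rfl⟩
      have := JBS_nonneg (x * Real.exp (-c * τ))
      positivity⟩
  have hne : ∃ f g, IsAC f g ∧ 1 / (1 - τ) * (∫ t in τ..1, Real.exp (f t)) = x := by
    obtain ⟨φ, ψ, hφψ, hφ⟩ := exists_isAC_integral_exp_eq hx
    obtain ⟨f, g, hfg, hf, -⟩ := exists_forward_path_energy_eq hτ0 hτ1 0 hφψ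
    exact ⟨f, g, hfg, by rw [hf, hφ, zero_mul, Real.exp_zero, one_mul]⟩
  refine le_Jfwd hne fun f g hfg hf => ?_
  obtain ⟨c, φ, ψ, hφψ, hφ, hE⟩ := exists_bs_path_energy_le hτ0 hτ1 hfg
  have hφ' : ∫ u in (0:ℝ)..1, Real.exp (φ u) = x * Real.exp (-c * τ) := by
    rw [← hf, hφ, neg_mul, Real.exp_neg, mul_comm, inv_mul_cancel_left₀ (Real.exp_pos _).ne']
  calc _ ≤ 1 / 2 * c ^ 2 * τ + 1 / (1 - τ) * JBS (x * Real.exp (-c * τ)) := ciInf_le hbdd c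
    _ ≤ 1 / 2 * c ^ 2 * τ + 1 / (1 - τ) * energy ψ := by
      gcongr
      exact hφ' ▸ JBS_le_energy hφψ
    _ ≤ energy g := hE

end Decomposition

end ForwardAsian

/-- For every `x > 0` and `τ ∈ (0,1)`,
`J_fwd(x, τ) = inf_{c ∈ ℝ} { (1/2)c²τ + (1/(1−τ)) · J_BS(x·e^{−cτ}) }`. -/
theorem forward_rate_function_double_layer (x τ : ℝ) (hx : 0 < x) (hτ : τ ∈ Ioo (0:ℝ) 1) :
    Jfwd x τ =
      ⨅ c : ℝ, ((1 / 2) * c ^ 2 * τ + (1 / (1 - τ)) * JBS (x * Real.exp (-c * τ))) :=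
  le_antisymm (le_ciInf (ForwardAsian.Jfwd_le hx hτ.1 hτ.2))
    (ForwardAsian.iInf_le_Jfwd hx hτ.1 hτ.2)
end

section
/- For every x ≥ 1, if β ≥ 0 satisfies sinh(β)/β = x (with the convention that sinh(β)/β = 1 when β = 0), then J_BS(x) = (1/2)β² − β·tanh(β/2). -/
/-!
With `β = 2c`, the path `φ(t) = 2 log (cosh c / cosh (c (1 - t)))` satisfies
`∫₀¹ e^φ = sinh β / β` and has energy `E_c = 2c² - 2c tanh c = β²/2 - β tanh (β/2)`.

Conversely, let `φ = ∫ g` attain its maximum `m = 2 log (cosh s)` over `[0, 1]` at `t₀`, and let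
`q(y) = ν √(e^m - e^y)`. As `φ` is absolutely continuous, `∫₀^t₀ q(φ) φ' = ν Φ` with
`Φ = ∫₀^m √(e^m - e^y) dy = 2 (s cosh s - sinh s)`, and `φ'²/2 ≥ q(φ) φ' - q(φ)²/2` gives
`ν Φ - ν² (e^m - x) / 2 ≤ energy`. Optimising over `ν` reduces the lower bound to
`2 E_c (e^m - x) ≤ Φ²`; as functions of `s`, the difference of the two sides vanishes at `s = c`
and its derivative has the sign of `s - c`.
-/

open MeasureTheory Set

open Real
open scoped NNReal

namespace Real

theorem one_sub_tanh_sq (x : ℝ) : 1 - tanh x ^ 2 = 1 / cosh x ^ 2 := by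
  have := cosh_pos x
  rw [tanh_eq_sinh_div_cosh]
  field_simp
  linear_combination cosh_sq x

theorem hasDerivAt_tanh (x : ℝ) : HasDerivAt tanh (1 - tanh x ^ 2) x := by
  have h : HasDerivAt (fun y => sinh y / cosh y) _ x :=
    (hasDerivAt_sinh x).div (hasDerivAt_cosh x) (cosh_pos x).ne'
  convert h using 1
  · exact funext tanh_eq_sinh_div_cosh
  · rw [one_sub_tanh_sq, ← cosh_sq_sub_sinh_sq x]
    ring

@[fun_prop]
theorem continuous_tanh : Continuous tanh :=
  continuous_iff_continuousAt.2 fun x => (hasDerivAt_tanh x).continuousAt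

theorem hasDerivAt_log_cosh (x : ℝ) : HasDerivAt (fun y => log (cosh y)) (tanh x) x := by
  rw [tanh_eq_sinh_div_cosh]
  exact (hasDerivAt_cosh x).log (cosh_pos x).ne'

theorem exp_two_mul_log_cosh (x : ℝ) : exp (2 * log (cosh x)) = cosh x ^ 2 := by
  rw [← log_rpow (cosh_pos x), exp_log (by positivity)]
  norm_cast

theorem hasDerivAt_sub_tanh (x : ℝ) : HasDerivAt (fun y => y - tanh y) (tanh x ^ 2) x :=
  ((hasDerivAt_id' x).sub (hasDerivAt_tanh x)).congr_deriv (by ring)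

theorem tanh_nonneg {x : ℝ} (hx : 0 ≤ x) : 0 ≤ tanh x := by
  rw [tanh_eq_sinh_div_cosh]
  exact div_nonneg (sinh_nonneg_iff.2 hx) (cosh_pos x).le

theorem strictMonoOn_sub_tanh : StrictMonoOn (fun y => y - tanh y) (Ici 0) := by
  refine strictMonoOn_of_hasDerivWithinAt_pos (convex_Ici 0)
    (continuous_id.sub continuous_tanh).continuousOn
    (fun x _ => (hasDerivAt_sub_tanh x).hasDerivWithinAt) fun x hx => ?_
  rw [interior_Ici] at hx
  rw [tanh_eq_sinh_div_cosh]
  exact pow_pos (div_pos (sinh_pos_iff.2 hx) (cosh_pos x)) 2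

theorem tanh_lt_self {x : ℝ} (hx : 0 < x) : tanh x < x := by
  simpa using strictMonoOn_sub_tanh self_mem_Ici hx.le hx

theorem tanh_le_self {x : ℝ} (hx : 0 ≤ x) : tanh x ≤ x := by
  rcases hx.eq_or_lt with rfl | hx
  · simp
  · exact (tanh_lt_self hx).le

theorem integral_tanh_sq (s : ℝ) : ∫ u in (0 : ℝ)..s, tanh u ^ 2 = s - tanh s := by
  rw [intervalIntegral.integral_eq_sub_of_hasDerivAt (fun x _ => hasDerivAt_sub_tanh x)
    ((continuous_tanh.pow 2).intervalIntegrable _ _)]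
  simp

end Real

theorem le_of_hasDerivAt_of_nonpos_of_nonneg {f f' : ℝ → ℝ} {a c s : ℝ}
    (hf : ∀ t, HasDerivAt f (f' t) t) (hleft : ∀ t ∈ Ioo a c, f' t ≤ 0)
    (hright : ∀ t ∈ Ioi c, 0 ≤ f' t) (hs : a ≤ s) : f c ≤ f s := by
  have hcont : Continuous f := continuous_iff_continuousAt.2 fun t => (hf t).continuousAt
  rcases le_total s c with hsc | hcs
  · refine antitoneOn_of_hasDerivWithinAt_nonpos (convex_Icc a c) hcont.continuousOn
      (fun t _ => (hf t).hasDerivWithinAt) (by rwa [interior_Icc]) ⟨hs, hsc⟩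
      ⟨hs.trans hsc, le_rfl⟩ hsc
  · refine monotoneOn_of_hasDerivWithinAt_nonneg (convex_Ici c) hcont.continuousOn
      (fun t _ => (hf t).hasDerivWithinAt) (by rwa [interior_Ici]) self_mem_Ici hcs hcs

/-- The energy of `t ↦ 2 log (cosh c / cosh (c (1 - t)))`, the minimiser for
`J_BS (sinh (2 c) / (2 c))`. -/
noncomputable def optimalEnergy (c : ℝ) : ℝ := 2 * c ^ 2 - 2 * c * tanh c

theorem optimalEnergy_half (β : ℝ) :
    optimalEnergy (β / 2) = 1 / 2 * β ^ 2 - β * tanh (β / 2) := by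
  unfold optimalEnergy
  ring

theorem optimalEnergy_nonneg {c : ℝ} (hc : 0 ≤ c) : 0 ≤ optimalEnergy c := by
  unfold optimalEnergy
  nlinarith [tanh_le_self hc]

theorem optimalEnergy_mul_cosh (t : ℝ) :
    optimalEnergy t * cosh t = 2 * t * (t * cosh t - sinh t) := by
  unfold optimalEnergy
  rw [tanh_eq_sinh_div_cosh]
  field_simp [(cosh_pos t).ne']

theorem monotoneOn_optimalEnergy : MonotoneOn optimalEnergy (Ici 0) := by
  have hderiv (t : ℝ) : HasDerivAt optimalEnergy (2 * (t - tanh t) + 2 * t * tanh t ^ 2) t := by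
    show HasDerivAt (fun t => 2 * t ^ 2 - 2 * t * tanh t) _ t
    exact (((hasDerivAt_pow 2 t).const_mul 2).sub
      (((hasDerivAt_id' t).const_mul 2).mul (hasDerivAt_tanh t))).congr_deriv (by push_cast; ring)
  refine monotoneOn_of_hasDerivWithinAt_nonneg (convex_Ici 0)
    (continuous_iff_continuousAt.2 fun t => (hderiv t).continuousAt).continuousOn
    (fun t _ => (hderiv t).hasDerivWithinAt) fun t ht => ?_
  rw [interior_Ici] at ht
  nlinarith [tanh_le_self ht.le, mul_nonneg ht.le (sq_nonneg (tanh t))]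

theorem optimalEnergy_mul_le {c s : ℝ} (hc : 0 < c) (hs : 0 ≤ s) :
    2 * optimalEnergy c * (cosh s ^ 2 - sinh c * cosh c / c) ≤ (2 * (s * cosh s - sinh s)) ^ 2 := by
  set H : ℝ → ℝ := fun t =>
    (2 * (t * cosh t - sinh t)) ^ 2 - 2 * optimalEnergy c * (cosh t ^ 2 - sinh c * cosh c / c)
  have hderiv (t : ℝ) :
      HasDerivAt H (4 * sinh t * cosh t * (optimalEnergy t - optimalEnergy c)) t := by
    have hmain : HasDerivAt (fun t => t * cosh t - sinh t) (t * sinh t) t :=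
      ((hasDerivAt_id' t).mul (hasDerivAt_cosh t)).sub (hasDerivAt_sinh t) |>.congr_deriv
        (by ring)
    have h := ((hmain.const_mul 2).pow 2).sub
      ((((hasDerivAt_cosh t).pow 2).sub_const (sinh c * cosh c / c)).const_mul
        (2 * optimalEnergy c))
    exact h.congr_deriv (by linear_combination (-4 * sinh t) * optimalEnergy_mul_cosh t)
  have hHc : H c = 0 := by
    simp only [H, optimalEnergy, tanh_eq_sinh_div_cosh]
    field_simp [(cosh_pos c).ne']
    ring
  have hsign {t : ℝ} (ht : 0 ≤ t) : 0 ≤ 4 * sinh t * cosh t := by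
    have := sinh_nonneg_iff.2 ht
    have := cosh_pos t
    positivity
  have hmono {t u : ℝ} (ht : 0 ≤ t) (htu : t ≤ u) : optimalEnergy t ≤ optimalEnergy u :=
    monotoneOn_optimalEnergy ht (ht.trans htu) htu
  have key := le_of_hasDerivAt_of_nonpos_of_nonneg hderiv
    (fun t ht => mul_nonpos_of_nonneg_of_nonpos (hsign ht.1.le)
      (sub_nonpos.2 (hmono ht.1.le ht.2.le)))
    (fun t ht => mul_nonneg (hsign (hc.le.trans (le_of_lt ht)))
      (sub_nonneg.2 (hmono hc.le (le_of_lt ht)))) hs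
  simp only [hHc, H] at key
  linarith

theorem integral_sqrt_exp_sub_exp {s m : ℝ} (hs : 0 ≤ s) (hm : cosh s ^ 2 = exp m) :
    ∫ y in (0 : ℝ)..m, √(exp m - exp y) = 2 * (s * cosh s - sinh s) := by
  set θ : ℝ → ℝ := fun u => m - 2 * log (cosh u)
  have hθ (u : ℝ) : HasDerivAt θ (-(2 * tanh u)) u :=
    ((hasDerivAt_log_cosh u).const_mul 2).const_sub m
  have hθs : θ s = 0 :=
    sub_eq_zero.2 (exp_injective ((exp_two_mul_log_cosh s).trans hm)).symm
  have hθ0 : θ 0 = m := by simp [θ]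
  have hsub := intervalIntegral.integral_comp_mul_deriv (a := s) (b := 0) (fun u _ => hθ u)
    (continuous_tanh.const_mul 2).neg.continuousOn
    (by fun_prop : Continuous fun y => √(exp m - exp y))
  rw [hθs, hθ0] at hsub
  have hintegrand : ∀ u ∈ uIcc s 0,
      ((fun y => √(exp m - exp y)) ∘ θ) u * -(2 * tanh u) = -(2 * cosh s) * tanh u ^ 2 := by
    intro u hu
    have hu : 0 ≤ u := by rw [uIcc_of_ge hs] at hu; exact hu.1
    have hexp : exp m - exp (θ u) = (cosh s * tanh u) ^ 2 := by
      simp only [θ, exp_sub, exp_two_mul_log_cosh]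
      rw [← hm, div_eq_mul_one_div, ← one_sub_tanh_sq]
      ring
    rw [Function.comp_apply, hexp, sqrt_sq (mul_nonneg (cosh_pos s).le (tanh_nonneg hu))]
    ring
  rw [← hsub, intervalIntegral.integral_congr hintegrand, intervalIntegral.integral_const_mul,
    intervalIntegral.integral_symm, integral_tanh_sq, tanh_eq_sinh_div_cosh]
  field_simp [(cosh_pos s).ne']

theorem LipschitzWith.comp_absolutelyContinuousOnInterval {X Y : Type*} [PseudoMetricSpace X]
    [PseudoMetricSpace Y] {K : ℝ≥0} {Q : X → Y} {f : ℝ → X} {a b : ℝ} (hQ : LipschitzWith K Q)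
    (hf : AbsolutelyContinuousOnInterval f a b) : AbsolutelyContinuousOnInterval (Q ∘ f) a b := by
  unfold AbsolutelyContinuousOnInterval at hf ⊢
  have h := hf.const_mul (K : ℝ)
  rw [mul_zero] at h
  refine squeeze_zero (fun _ => Finset.sum_nonneg fun _ _ => dist_nonneg) (fun E => ?_) h
  rw [Finset.mul_sum]
  exact Finset.sum_le_sum fun i _ => hQ.dist_le_mul _ _

theorem lipschitzWith_primitive {q : ℝ → ℝ} {C : ℝ≥0} (hq : Continuous q) (hC : ∀ y, |q y| ≤ C) :
    LipschitzWith C (fun y => ∫ r in (0 : ℝ)..y, q r) := by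
  refine LipschitzWith.of_dist_le_mul fun x y => ?_
  rw [Real.dist_eq, Real.dist_eq, intervalIntegral.integral_interval_sub_left
    (hq.intervalIntegrable _ _) (hq.intervalIntegrable _ _)]
  exact intervalIntegral.norm_integral_le_of_norm_le_const (f := q) fun r _ =>
    (Real.norm_eq_abs _).trans_le (hC r)

theorem LipschitzWith.integral_comp_primitive_mul {K : ℝ≥0} {Q q g : ℝ → ℝ} {a b : ℝ}
    (hQ : LipschitzWith K Q) (hQq : ∀ y, HasDerivAt Q (q y) y)
    (hg : IntervalIntegrable g volume a b) :
    ∫ x in a..b, q (∫ t in a..x, g t) * g x = Q (∫ t in a..b, g t) - Q 0 := by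
  have h := (hQ.comp_absolutelyContinuousOnInterval
    (hg.absolutelyContinuousOnInterval_intervalIntegral left_mem_uIcc)).integral_deriv_eq_sub
  simp only [Function.comp_apply, intervalIntegral.integral_same] at h
  rw [← h]
  refine intervalIntegral.integral_congr_ae ?_
  filter_upwards [hg.ae_hasDerivAt_integral] with x hx hxI
  exact ((hQq _).comp x (hx (uIoc_subset_uIcc hxI) a left_mem_uIcc)).deriv.symm

theorem sub_le_energy_add {K : ℝ≥0} {Q q g : ℝ → ℝ} (hQ : LipschitzWith K Q)
    (hQq : ∀ y, HasDerivAt Q (q y) y) (hq : Continuous q)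
    (hg : IntervalIntegrable g volume 0 1)
    (hg2 : IntervalIntegrable (fun t => g t ^ 2) volume 0 1) {t₀ : ℝ} (ht₀ : t₀ ∈ Icc (0 : ℝ) 1) :
    Q (∫ s in (0 : ℝ)..t₀, g s) - Q 0 ≤
      energy g + 1 / 2 * ∫ t in (0 : ℝ)..1, q (∫ s in (0 : ℝ)..t, g s) ^ 2 := by
  set φ := fun t => ∫ s in (0 : ℝ)..t, g s
  have hsub : uIcc 0 t₀ ⊆ uIcc (0 : ℝ) 1 :=
    uIcc_subset_uIcc left_mem_uIcc (by rwa [uIcc_of_le zero_le_one])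
  have hqφ : ContinuousOn (fun t => q (φ t)) (uIcc 0 1) :=
    hq.comp_continuousOn
      (hg.absolutelyContinuousOnInterval_intervalIntegral left_mem_uIcc).continuousOn
  have hqφ2 : IntervalIntegrable (fun t => q (φ t) ^ 2) volume 0 1 := (hqφ.pow 2).intervalIntegrable
  have hint : IntervalIntegrable (fun t => (g t ^ 2 + q (φ t) ^ 2) / 2) volume 0 1 :=
    (hg2.add hqφ2).div_const 2
  rw [← hQ.integral_comp_primitive_mul hQq (hg.mono_set hsub)]
  calc ∫ x in (0 : ℝ)..t₀, q (φ x) * g x ≤ ∫ x in (0 : ℝ)..t₀, (g x ^ 2 + q (φ x) ^ 2) / 2 :=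
        intervalIntegral.integral_mono_on ht₀.1
          ((hg.mono_set hsub).continuousOn_mul (hqφ.mono hsub))
          (hint.mono_set hsub) fun x _ => by nlinarith [sq_nonneg (g x - q (φ x))]
    _ ≤ ∫ x in (0 : ℝ)..1, (g x ^ 2 + q (φ x) ^ 2) / 2 :=
        intervalIntegral.integral_mono_interval le_rfl ht₀.1 ht₀.2
          (Filter.Eventually.of_forall fun x => by simp only [Pi.zero_apply]; positivity) hint
    _ = energy g + 1 / 2 * ∫ t in (0 : ℝ)..1, q (φ t) ^ 2 := by
        rw [intervalIntegral.integral_div, intervalIntegral.integral_add hg2 hqφ2, energy]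
        ring

theorem le_of_forall_mul_sub_sq_le {T Φ B E : ℝ} (hΦ : 0 < Φ) (hT : 0 ≤ T)
    (hkey : 2 * T * B ≤ Φ ^ 2) (h : ∀ ν, 0 ≤ ν → ν * Φ - ν ^ 2 / 2 * B ≤ E) : T ≤ E := by
  refine le_trans ?_ (h (2 * T / Φ) (by positivity))
  rw [div_mul_cancel₀ _ hΦ.ne', div_pow, le_sub_iff_add_le, ← le_sub_iff_add_le', div_div,
    div_mul_eq_mul_div, div_le_iff₀ (by positivity)]
  nlinarith

theorem mul_sub_sq_mul_le_energy {g : ℝ → ℝ} (hg : IntervalIntegrable g volume 0 1)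
    (hg2 : IntervalIntegrable (fun t => g t ^ 2) volume 0 1) {t₀ m s ν : ℝ}
    (ht₀ : t₀ ∈ Icc (0 : ℝ) 1) (hm : ∫ u in (0 : ℝ)..t₀, g u = m)
    (hmax : ∀ t ∈ Icc (0 : ℝ) 1, ∫ u in (0 : ℝ)..t, g u ≤ m)
    (hs : 0 ≤ s) (hcosh : cosh s ^ 2 = exp m) (hν : 0 ≤ ν) :
    ν * (2 * (s * cosh s - sinh s)) -
        ν ^ 2 / 2 * (cosh s ^ 2 - ∫ t in (0 : ℝ)..1, exp (∫ u in (0 : ℝ)..t, g u)) ≤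
      energy g := by
  set φ := fun t => ∫ u in (0 : ℝ)..t, g u
  set q := fun y => ν * √(exp m - exp y)
  have hq : Continuous q := by fun_prop
  have hqC (y : ℝ) : |q y| ≤ (⟨ν * √(exp m), by positivity⟩ : ℝ≥0) := by
    show |q y| ≤ ν * √(exp m)
    rw [abs_of_nonneg (by positivity)]
    exact mul_le_mul_of_nonneg_left (sqrt_le_sqrt (by linarith [exp_pos y])) hν
  have hb := sub_le_energy_add (lipschitzWith_primitive hq hqC)
    (fun y => (hq.integral_hasStrictDerivAt 0 y).hasDerivAt) hq hg hg2 ht₀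
  have hsq : ∫ t in (0 : ℝ)..1, q (φ t) ^ 2 =
      ν ^ 2 * (cosh s ^ 2 - ∫ t in (0 : ℝ)..1, exp (φ t)) := by
    have hφ : ContinuousOn φ (uIcc 0 1) :=
      (hg.absolutelyContinuousOnInterval_intervalIntegral left_mem_uIcc).continuousOn
    have hpt : ∀ t ∈ uIcc (0 : ℝ) 1, q (φ t) ^ 2 = ν ^ 2 * (exp m - exp (φ t)) := by
      intro t ht
      rw [uIcc_of_le zero_le_one] at ht
      rw [mul_pow, sq_sqrt (sub_nonneg.2 (exp_le_exp.2 (hmax t ht)))]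
    rw [intervalIntegral.integral_congr hpt, intervalIntegral.integral_const_mul,
      intervalIntegral.integral_sub (g := fun t => exp (φ t)) intervalIntegrable_const
        (continuous_exp.comp_continuousOn hφ).intervalIntegrable, hcosh]
    simp
  simp only [hm, intervalIntegral.integral_same, sub_zero, q,
    intervalIntegral.integral_const_mul] at hb
  rw [integral_sqrt_exp_sub_exp hs hcosh, hsq] at hb
  linarith

theorem optimalEnergy_le_energy {c : ℝ} (hc : 0 < c) {g : ℝ → ℝ}
    (hg : IntervalIntegrable g volume 0 1)
    (hg2 : IntervalIntegrable (fun t => g t ^ 2) volume 0 1)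
    (hX : ∫ t in (0 : ℝ)..1, exp (∫ u in (0 : ℝ)..t, g u) = sinh c * cosh c / c) :
    optimalEnergy c ≤ energy g := by
  set φ := fun t => ∫ u in (0 : ℝ)..t, g u
  have hφ : ContinuousOn φ (Icc 0 1) := by
    simpa [uIcc_of_le zero_le_one] using
      (hg.absolutelyContinuousOnInterval_intervalIntegral left_mem_uIcc).continuousOn
  obtain ⟨t₀, ht₀, hmax⟩ := isCompact_Icc.exists_isMaxOn (nonempty_Icc.2 zero_le_one) hφ
  have hm0 : 0 ≤ φ t₀ := by simpa [φ] using hmax (left_mem_Icc.2 zero_le_one)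
  have hexp_half : 1 ≤ exp (φ t₀ / 2) := one_le_exp (by positivity)
  set s := arcosh (exp (φ t₀ / 2))
  have hcosh : cosh s ^ 2 = exp (φ t₀) := by
    rw [cosh_arcosh hexp_half, sq, ← exp_add, add_halves]
  have hx_le : sinh c * cosh c / c ≤ exp (φ t₀) := by
    rw [← hX]
    calc ∫ t in (0 : ℝ)..1, exp (φ t) ≤ ∫ t in (0 : ℝ)..1, exp (φ t₀) :=
          intervalIntegral.integral_mono_on zero_le_one
            (continuous_exp.comp_continuousOn (by rwa [uIcc_of_le zero_le_one])).intervalIntegrable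
            intervalIntegrable_const fun t ht => exp_le_exp.2 (hmax ht)
      _ = exp (φ t₀) := by simp
  have hx_gt : 1 < sinh c * cosh c / c := by
    have := self_lt_sinh_iff.2 (by positivity : 0 < 2 * c)
    rw [sinh_two_mul] at this
    rw [lt_div_iff₀ hc]
    linarith
  have hs : 0 < s := by
    refine (arcosh_nonneg hexp_half).lt_of_ne fun h => ?_
    rw [show s = 0 from h.symm, cosh_zero] at hcosh
    linarith
  refine le_of_forall_mul_sub_sq_le ?_ (optimalEnergy_nonneg hc.le) (optimalEnergy_mul_le hc hs.le)
    fun ν hν => ?_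
  · have := tanh_lt_self hs
    rw [tanh_eq_sinh_div_cosh, div_lt_iff₀ (cosh_pos s)] at this
    linarith
  · simpa [hX] using mul_sub_sq_mul_le_energy hg hg2 ht₀ rfl (fun t ht => hmax ht) hs.le hcosh hν

theorem energy_nonneg (g : ℝ → ℝ) : 0 ≤ energy g :=
  mul_nonneg (by norm_num) (intervalIntegral.integral_nonneg zero_le_one fun t _ => sq_nonneg _)

theorem isAC_of_hasDerivAt {f g : ℝ → ℝ} (hf : ∀ t, HasDerivAt f (g t) t) (hg : Continuous g)
    (h0 : f 0 = 0) : IsAC f g :=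
  ⟨hg.intervalIntegrable 0 1, (hg.pow 2).intervalIntegrable 0 1, fun t _ => by
    rw [intervalIntegral.integral_eq_sub_of_hasDerivAt (fun x _ => hf x)
      (hg.intervalIntegrable 0 t), h0, sub_zero]⟩

theorem exists_isAC_energy_eq_optimalEnergy {c : ℝ} (hc : 0 < c) :
    ∃ f g : ℝ → ℝ, IsAC f g ∧ ∫ u in (0 : ℝ)..1, exp (f u) = sinh c * cosh c / c ∧
      energy g = optimalEnergy c := by
  have hlin (t : ℝ) : HasDerivAt (fun t => c - c * t) (-c) t := by
    simpa using ((hasDerivAt_id' t).const_mul c).const_sub c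
  have hsubst (F : ℝ → ℝ) : ∫ t in (0 : ℝ)..1, F (c - c * t) = c⁻¹ * ∫ x in (0 : ℝ)..c, F x := by
    simpa using intervalIntegral.integral_comp_sub_mul (a := 0) (b := 1) F hc.ne' c
  refine ⟨fun t => 2 * log (cosh c) - 2 * log (cosh (c - c * t)),
    fun t => 2 * c * tanh (c - c * t),
    isAC_of_hasDerivAt (fun t => ?_) (by fun_prop) (by simp),
    ?_, ?_⟩
  · exact (((hasDerivAt_log_cosh _).comp t (hlin t)).const_mul 2).const_sub _ |>.congr_deriv
      (by ring)
  · have hexp (t : ℝ) : exp (2 * log (cosh c) - 2 * log (cosh (c - c * t))) =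
        cosh c ^ 2 * (1 - tanh (c - c * t) ^ 2) := by
      rw [exp_sub, exp_two_mul_log_cosh, exp_two_mul_log_cosh, one_sub_tanh_sq]
      ring
    simp_rw [hexp]
    rw [hsubst fun x => cosh c ^ 2 * (1 - tanh x ^ 2), intervalIntegral.integral_const_mul,
      intervalIntegral.integral_eq_sub_of_hasDerivAt (fun x _ => hasDerivAt_tanh x)
        ((continuous_const.sub (continuous_tanh.pow 2)).intervalIntegrable _ _),
      tanh_eq_sinh_div_cosh]
    field_simp [(cosh_pos c).ne']
    simp
  · rw [energy, hsubst fun x => (2 * c * tanh x) ^ 2]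
    simp_rw [mul_pow]
    rw [intervalIntegral.integral_const_mul, integral_tanh_sq, optimalEnergy]
    field_simp

theorem JBS_sinh_mul_cosh_div {c : ℝ} (hc : 0 < c) :
    JBS (sinh c * cosh c / c) = optimalEnergy c := by
  refine IsLeast.csInf_eq ⟨?_, ?_⟩
  · obtain ⟨f, g, hfg, hX, hE⟩ := exists_isAC_energy_eq_optimalEnergy hc
    exact ⟨f, g, hfg, hX, hE.symm⟩
  · rintro E ⟨f, g, ⟨hg, hg2, hf⟩, hX, rfl⟩
    refine optimalEnergy_le_energy hc hg hg2 (hX ▸ intervalIntegral.integral_congr fun t ht => ?_)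
    rw [uIcc_of_le zero_le_one] at ht
    simp only [hf t ht]

theorem JBS_one : JBS 1 = 0 := by
  refine IsLeast.csInf_eq ⟨⟨0, 0, isAC_of_hasDerivAt (fun t => hasDerivAt_const t 0)
    continuous_const rfl, by simp, by simp [energy]⟩, ?_⟩
  rintro E ⟨f, g, -, -, rfl⟩
  exact energy_nonneg g

theorem JBS_right_wing_general (x β : ℝ) (hβ : 0 ≤ β)
    (hconv : β = 0 → x = 1) (heq : β ≠ 0 → Real.sinh β / β = x) :
    JBS x = (1 / 2) * β ^ 2 - β * Real.tanh (β / 2) := by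
  rw [← optimalEnergy_half]
  rcases hβ.eq_or_lt with rfl | hβ
  · simp [hconv rfl, JBS_one, optimalEnergy]
  · have hx : sinh (β / 2) * cosh (β / 2) / (β / 2) = x := by
      have h2 := sinh_two_mul (β / 2)
      rw [show 2 * (β / 2) = β by ring] at h2
      rw [← heq hβ.ne', h2]
      field_simp
    rw [← hx, JBS_sinh_mul_cosh_div (half_pos hβ)]

/-- For `x ≥ 1`, if `β ≥ 0` satisfies `sinh(β)/β = x` (with the convention
`sinh(β)/β = 1` at `β = 0`), then `J_BS(x) = (1/2)β² − β·tanh(β/2)`. -/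
theorem JBS_right_wing (x β : ℝ) (hx : 1 ≤ x) (hβ : 0 ≤ β)
    (hconv : β = 0 → x = 1) (heq : β ≠ 0 → Real.sinh β / β = x) :
    JBS x = (1 / 2) * β ^ 2 - β * Real.tanh (β / 2) :=
  JBS_right_wing_general x β hβ hconv heq
end

section
/- For every x with 0 < x ≤ 1, if ξ ∈ [0, π/2) satisfies sin(2ξ)/(2ξ) = x (with the convention that sin(2ξ)/(2ξ) = 1 when ξ = 0), then J_BS(x) = 2ξ·(tan(ξ) − ξ). -/
open MeasureTheory Set

/-!
The minimiser is `φ(t) = 2 log cos ξ - 2 log cos (ξ (t - 1))`: it solves the Euler–Lagrange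
equation `φ'' = λ e^φ` with multiplier `λ = 2ξ² / cos² ξ`, starts at `φ(0) = 0` and has free end
`φ'(1) = 0`; its constraint value is `sin (2ξ) / (2ξ)` and its energy `2ξ (tan ξ - ξ)`.
For a competitor `f = ∫ g` with the same constraint value, convexity of `exp` gives
`∫ e^φ (f - φ) ≤ ∫ (e^f - e^φ) = 0`. Integrating `λ e^φ = φ''` by parts against `f - φ` (which
vanishes at `0`, while `φ'` vanishes at `1`) turns this into `∫ φ' (g - φ') ≥ 0`, and then
`∫ g² = ∫ (g - φ')² + 2 ∫ φ' (g - φ') + ∫ φ'² ≥ ∫ φ'²`.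
-/

open Real

theorem integral_deriv_mul_primitive {v g : ℝ → ℝ} {a b : ℝ}
    (hv : ContDiffOn ℝ 1 v (uIcc a b)) (hg : IntervalIntegrable g volume a b) :
    ∫ t in a..b, deriv v t * ∫ s in a..t, g s
      = v b * (∫ s in a..b, g s) - ∫ t in a..b, v t * g t := by
  have hG := hg.absolutelyContinuousOnInterval_intervalIntegral (c := a) left_mem_uIcc
  have hderiv : ∀ᵐ t, t ∈ uIoc a b →
      deriv (fun x => ∫ s in a..x, g s) t * v t = v t * g t := by
    filter_upwards [hg.ae_hasDerivAt_integral] with t ht hmem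
    rw [(ht (uIoc_subset_uIcc hmem) a left_mem_uIcc).deriv, mul_comm]
  simp_rw [mul_comm (deriv v _)]
  rw [hG.integral_mul_deriv_eq_deriv_mul hv.absolutelyContinuousOnInterval,
    intervalIntegral.integral_congr_ae hderiv, intervalIntegral.integral_same, zero_mul,
    sub_zero, mul_comm]

theorem integral_exp_mul_sub_nonpos {f φ : ℝ → ℝ} {a b : ℝ} (hab : a ≤ b)
    (hf : ContinuousOn f (Icc a b)) (hφ : ContinuousOn φ (Icc a b))
    (h : ∫ t in a..b, exp (f t) = ∫ t in a..b, exp (φ t)) :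
    ∫ t in a..b, exp (φ t) * (f t - φ t) ≤ 0 := by
  have htangent : ∀ t, exp (φ t) * (f t - φ t) ≤ exp (f t) - exp (φ t) := fun t => by
    have := mul_le_mul_of_nonneg_left (add_one_le_exp (f t - φ t)) (exp_pos (φ t)).le
    rw [← exp_add, add_sub_cancel] at this
    linarith
  rw [← uIcc_of_le hab] at hf hφ
  calc ∫ t in a..b, exp (φ t) * (f t - φ t)
      ≤ ∫ t in a..b, (exp (f t) - exp (φ t)) :=
        intervalIntegral.integral_mono_on hab (hφ.rexp.mul (hf.sub hφ)).intervalIntegrable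
          (hf.rexp.sub hφ.rexp).intervalIntegrable fun t _ => htangent t
    _ = 0 := by
        rw [intervalIntegral.integral_sub hf.rexp.intervalIntegrable
          hφ.rexp.intervalIntegrable, h, sub_self]

theorem integral_sq_le_of_integral_mul_sub_nonneg {g h : ℝ → ℝ} {a b : ℝ} (hab : a ≤ b)
    (hg : IntervalIntegrable g volume a b)
    (hg2 : IntervalIntegrable (fun t => g t ^ 2) volume a b)
    (hh : ContinuousOn h (uIcc a b)) (H : 0 ≤ ∫ t in a..b, h t * (g t - h t)) :
    ∫ t in a..b, h t ^ 2 ≤ ∫ t in a..b, g t ^ 2 := by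
  have hh2 : IntervalIntegrable (fun t => h t ^ 2) volume a b := (hh.pow 2).intervalIntegrable
  have hcross : IntervalIntegrable (fun t => h t * (g t - h t)) volume a b :=
    (hg.sub hh.intervalIntegrable).continuousOn_mul hh
  have hmono : ∫ t in a..b, 2 * (h t * (g t - h t)) ≤ ∫ t in a..b, (g t ^ 2 - h t ^ 2) :=
    intervalIntegral.integral_mono_on hab (hcross.const_mul 2) (hg2.sub hh2)
      fun t _ => by nlinarith [sq_nonneg (g t - h t)]
  rw [intervalIntegral.integral_const_mul, intervalIntegral.integral_sub hg2 hh2] at hmono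
  linarith

noncomputable def optimalPath (ξ : ℝ) : ℝ → ℝ :=
  fun t => 2 * log (cos ξ) - 2 * log (cos (ξ * (t - 1)))

noncomputable def optimalSpeed (ξ : ℝ) : ℝ → ℝ :=
  fun t => 2 * ξ * tan (ξ * (t - 1))

section OptimalPath

variable {ξ t : ℝ}

theorem cos_mul_sub_one_pos (hξ : ξ ∈ Ico 0 (π / 2)) (ht : t ∈ Icc (0 : ℝ) 1) :
    0 < cos (ξ * (t - 1)) := by
  apply cos_pos_of_mem_Ioo
  constructor <;> nlinarith [hξ.1, hξ.2, ht.1, ht.2, pi_pos]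

theorem cos_pos_of_mem_Ico (hξ : ξ ∈ Ico 0 (π / 2)) : 0 < cos ξ :=
  cos_pos_of_mem_Ioo ⟨by linarith [hξ.1, pi_pos], hξ.2⟩

theorem hasDerivAt_mul_sub_one (ξ t : ℝ) : HasDerivAt (fun t => ξ * (t - 1)) ξ t := by
  simpa using ((hasDerivAt_id t).sub_const 1).const_mul ξ

theorem exp_optimalPath (hξ : ξ ∈ Ico 0 (π / 2)) (ht : t ∈ Icc (0 : ℝ) 1) :
    exp (optimalPath ξ t) = cos ξ ^ 2 / cos (ξ * (t - 1)) ^ 2 := by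
  have hcos := cos_pos_of_mem_Ico hξ
  have hexp_two_mul_log {c : ℝ} (hc : 0 < c) : exp (2 * log c) = c ^ 2 := by
    rw [mul_comm, ← rpow_def_of_pos hc, rpow_two]
  rw [optimalPath, exp_sub, hexp_two_mul_log hcos, hexp_two_mul_log (cos_mul_sub_one_pos hξ ht)]

theorem optimalPath_zero : optimalPath ξ 0 = 0 := by
  simp [optimalPath]

theorem optimalSpeed_one : optimalSpeed ξ 1 = 0 := by
  simp [optimalSpeed]

theorem hasDerivAt_optimalPath (hξ : ξ ∈ Ico 0 (π / 2)) (ht : t ∈ Icc (0 : ℝ) 1) :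
    HasDerivAt (optimalPath ξ) (optimalSpeed ξ t) t := by
  have hc := cos_mul_sub_one_pos hξ ht
  have hinner := hasDerivAt_mul_sub_one ξ t
  refine ((((hasDerivAt_cos _).comp t hinner).log hc.ne').const_mul 2 |>.const_sub
    (2 * log (cos ξ))).congr_deriv ?_
  simp only [optimalSpeed, tan_eq_sin_div_cos, Function.comp_apply]
  field_simp

theorem hasDerivAt_optimalSpeed (hξ : ξ ∈ Ico 0 (π / 2)) (ht : t ∈ Icc (0 : ℝ) 1) :
    HasDerivAt (optimalSpeed ξ) (2 * ξ ^ 2 / cos ξ ^ 2 * exp (optimalPath ξ t)) t := by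
  have hc := cos_mul_sub_one_pos hξ ht
  have hinner := hasDerivAt_mul_sub_one ξ t
  refine (((hasDerivAt_tan hc.ne').comp t hinner).const_mul (2 * ξ)).congr_deriv ?_
  rw [exp_optimalPath hξ ht]
  have := cos_pos_of_mem_Ico hξ
  field_simp

theorem continuousOn_optimalPath (hξ : ξ ∈ Ico 0 (π / 2)) :
    ContinuousOn (optimalPath ξ) (Icc 0 1) := fun _ ht =>
  (hasDerivAt_optimalPath hξ ht).continuousAt.continuousWithinAt

theorem contDiffOn_optimalSpeed (hξ : ξ ∈ Ico 0 (π / 2)) :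
    ContDiffOn ℝ 1 (optimalSpeed ξ) (Icc 0 1) := fun t ht => by
  have htan : ContDiffAt ℝ 1 tan (ξ * (t - 1)) :=
    contDiffAt_tan.2 (cos_mul_sub_one_pos hξ ht).ne'
  have hinner : ContDiffAt ℝ 1 (fun t : ℝ => ξ * (t - 1)) t := by fun_prop
  exact (contDiffAt_const.mul (htan.comp t hinner)).contDiffWithinAt

theorem integral_optimalSpeed (hξ : ξ ∈ Ico 0 (π / 2)) (ht : t ∈ Icc (0 : ℝ) 1) :
    ∫ s in 0..t, optimalSpeed ξ s = optimalPath ξ t := by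
  have hsub : uIcc 0 t ⊆ Icc 0 1 := by rw [uIcc_of_le ht.1]; exact Icc_subset_Icc_right ht.2
  rw [intervalIntegral.integral_eq_sub_of_hasDerivAt
    (fun s hs => hasDerivAt_optimalPath hξ (hsub hs))
    ((contDiffOn_optimalSpeed hξ).continuousOn.mono hsub).intervalIntegrable,
    optimalPath_zero, sub_zero]

theorem isAC_optimalPath (hξ : ξ ∈ Ico 0 (π / 2)) : IsAC (optimalPath ξ) (optimalSpeed ξ) := by
  have hcont := (contDiffOn_optimalSpeed hξ).continuousOn
  rw [← uIcc_of_le zero_le_one] at hcont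
  exact ⟨hcont.intervalIntegrable, (hcont.pow 2).intervalIntegrable,
    fun t ht => (integral_optimalSpeed hξ ht).symm⟩

theorem energy_optimalSpeed (hξ : ξ ∈ Ico 0 (π / 2)) :
    energy (optimalSpeed ξ) = 2 * ξ * (tan ξ - ξ) := by
  have hprimitive : ∀ t ∈ uIcc (0 : ℝ) 1,
      HasDerivAt (fun t => 2 * optimalSpeed ξ t - 4 * ξ ^ 2 * t) (optimalSpeed ξ t ^ 2) t := by
    intro t ht
    rw [uIcc_of_le zero_le_one] at ht
    refine (((hasDerivAt_optimalSpeed hξ ht).const_mul 2).sub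
      ((hasDerivAt_id t).const_mul (4 * ξ ^ 2))).congr_deriv ?_
    have hc := cos_mul_sub_one_pos hξ ht
    have := cos_pos_of_mem_Ico hξ
    rw [exp_optimalPath hξ ht, optimalSpeed, tan_eq_sin_div_cos]
    field_simp
    nlinarith [sin_sq_add_cos_sq (ξ * (t - 1))]
  rw [energy, intervalIntegral.integral_eq_sub_of_hasDerivAt hprimitive
    (isAC_optimalPath hξ).2.1, optimalSpeed_one, optimalSpeed]
  norm_num [tan_neg]
  ring

theorem integral_exp_optimalPath (hξ : ξ ∈ Ico 0 (π / 2)) (hξ0 : ξ ≠ 0) :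
    ∫ t in 0..1, exp (optimalPath ξ t) = sin (2 * ξ) / (2 * ξ) := by
  have hcos := cos_pos_of_mem_Ico hξ
  have hftc := intervalIntegral.integral_eq_sub_of_hasDerivAt
    (fun t ht => hasDerivAt_optimalSpeed hξ (uIcc_of_le (zero_le_one' ℝ) ▸ ht))
    ((continuousOn_optimalPath hξ).rexp.const_mul _ |>.mono
      (uIcc_of_le zero_le_one).subset).intervalIntegrable
  rw [intervalIntegral.integral_const_mul, optimalSpeed_one, optimalSpeed] at hftc
  norm_num [tan_neg] at hftc
  rw [tan_eq_sin_div_cos] at hftc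
  rw [sin_two_mul]
  field_simp at hftc ⊢
  linear_combination hftc

theorem energy_optimalSpeed_le (hξ : ξ ∈ Ico 0 (π / 2)) {f g : ℝ → ℝ} (hfg : IsAC f g)
    (hconstraint : ∫ t in 0..1, exp (f t) = ∫ t in 0..1, exp (optimalPath ξ t)) :
    energy (optimalSpeed ξ) ≤ energy g := by
  obtain ⟨hg, hg2, hf⟩ := hfg
  have h01 : uIcc (0 : ℝ) 1 = Icc 0 1 := uIcc_of_le zero_le_one
  have hspeed := contDiffOn_optimalSpeed hξ
  rw [← h01] at hspeed
  have hfc : ContinuousOn f (Icc 0 1) := by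
    rw [← h01]
    exact (hg.absolutelyContinuousOnInterval_intervalIntegral left_mem_uIcc).continuousOn.congr
      fun t ht => hf t (h01 ▸ ht)
  have hdiff : ∀ t ∈ Icc (0 : ℝ) 1,
      ∫ s in 0..t, (g s - optimalSpeed ξ s) = f t - optimalPath ξ t := by
    intro t ht
    have hsub : uIcc 0 t ⊆ uIcc 0 1 := uIcc_subset_uIcc_left (h01 ▸ ht)
    rw [intervalIntegral.integral_sub (hg.mono_set hsub)
      (hspeed.continuousOn.mono hsub).intervalIntegrable, hf t ht, integral_optimalSpeed hξ ht]
  have hparts : ∫ t in 0..1, 2 * ξ ^ 2 / cos ξ ^ 2 * exp (optimalPath ξ t) *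
        (f t - optimalPath ξ t) = -∫ t in 0..1, optimalSpeed ξ t * (g t - optimalSpeed ξ t) := by
    have hibp :=
      integral_deriv_mul_primitive hspeed (hg.sub hspeed.continuousOn.intervalIntegrable)
    rw [optimalSpeed_one, zero_mul, zero_sub] at hibp
    rw [← hibp]
    refine intervalIntegral.integral_congr fun t ht => ?_
    rw [h01] at ht
    simp only [(hasDerivAt_optimalSpeed hξ ht).deriv, hdiff t ht]
  have htangent := integral_exp_mul_sub_nonpos zero_le_one hfc (continuousOn_optimalPath hξ)
    hconstraint
  have hcross : 0 ≤ ∫ t in 0..1, optimalSpeed ξ t * (g t - optimalSpeed ξ t) := by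
    simp_rw [mul_assoc, intervalIntegral.integral_const_mul] at hparts
    nlinarith [mul_nonpos_of_nonneg_of_nonpos (by positivity : 0 ≤ 2 * ξ ^ 2 / cos ξ ^ 2)
      htangent]
  exact mul_le_mul_of_nonneg_left
    (integral_sq_le_of_integral_mul_sub_nonneg zero_le_one hg hg2 hspeed.continuousOn hcross)
    (by norm_num)

end OptimalPath

theorem JBS_left_wing_general (x ξ : ℝ)
    (hξ : ξ ∈ Ico (0:ℝ) (Real.pi / 2))
    (hconv : ξ = 0 → x = 1) (heq : ξ ≠ 0 → Real.sin (2 * ξ) / (2 * ξ) = x) :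
    JBS x = 2 * ξ * (Real.tan ξ - ξ) := by
  have hconstraint : ∫ t in 0..1, exp (optimalPath ξ t) = x := by
    rcases eq_or_ne ξ 0 with rfl | hξ0
    · simp [optimalPath, hconv rfl]
    · rw [integral_exp_optimalPath hξ hξ0, heq hξ0]
  rw [← energy_optimalSpeed hξ]
  refine IsLeast.csInf_eq ⟨⟨optimalPath ξ, optimalSpeed ξ, isAC_optimalPath hξ, hconstraint,
    rfl⟩, ?_⟩
  rintro _ ⟨f, g, hfg, hf, rfl⟩
  exact energy_optimalSpeed_le hξ hfg (hf.trans hconstraint.symm)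

/-- For `0 < x ≤ 1`, if `ξ ∈ [0, π/2)` satisfies `sin(2ξ)/(2ξ) = x`
(with the convention `sin(2ξ)/(2ξ) = 1` at `ξ = 0`), then `J_BS(x) = 2ξ(tan ξ − ξ)`. -/
theorem JBS_left_wing (x ξ : ℝ) (hx0 : 0 < x) (hx1 : x ≤ 1)
    (hξ : ξ ∈ Ico (0:ℝ) (Real.pi / 2))
    (hconv : ξ = 0 → x = 1) (heq : ξ ≠ 0 → Real.sin (2 * ξ) / (2 * ξ) = x) :
    JBS x = 2 * ξ * (Real.tan ξ - ξ) :=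
  JBS_left_wing_general x ξ hξ hconv heq
end

section
/- Let 0 < x < 1 and let ξ ∈ (0, π/2) satisfy sin(2ξ)/(2ξ) = x. Define φ : [0,1] → ℝ by φ(u) = log( cos²(ξ) / cos²(ξ(u−1)) ). Then φ(0) = 0, ∫₀¹ exp(φ(u)) du = x, (1/2)∫₀¹ (φ'(u))² du = 2ξ·(tan(ξ) − ξ), and this value equals J_BS(x); that is, φ attains the infimum defining J_BS(x). -/
/-!
The path `φ` solves the Euler–Lagrange equation `φ'' = λ e^φ` with `λ = 2ξ² / cos² ξ > 0` and the
free-endpoint condition `φ'(1) = 0`; integrating this equation gives `∫₀¹ e^φ = x`. For a competitor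
`f` with `f' = g` and `∫₀¹ e^f = x`, the inequality `g² ≥ φ'² + 2φ'(g - φ')` reduces minimality to
`∫₀¹ φ'(g - φ') ≥ 0`. Integrating by parts against the primitive `f - φ` of `g - φ'` turns this
integral into `-λ ∫₀¹ e^φ (f - φ)`, which is nonnegative because `e^φ (f - φ) ≤ e^f - e^φ` and
`∫₀¹ e^f = ∫₀¹ e^φ`.
-/

open MeasureTheory Set

theorem integral_mul_eq_sub_integral_deriv_mul_primitive {u u' h : ℝ → ℝ} {a b : ℝ}
    (hu : ∀ t ∈ uIcc a b, HasDerivAt u (u' t) t) (hu' : ContinuousOn u' (uIcc a b))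
    (hh : IntervalIntegrable h volume a b) :
    ∫ t in a..b, u t * h t =
      u b * (∫ t in a..b, h t) - ∫ t in a..b, u' t * ∫ s in a..t, h s := by
  obtain ⟨C, hC⟩ := isCompact_uIcc.exists_bound_of_continuousOn hu'
  have hu_ac : AbsolutelyContinuousOnInterval u a b :=
    (convex_uIcc a b).lipschitzOnWith_of_nnnorm_hasDerivWithin_le (C := C.toNNReal)
      (fun t ht => (hu t ht).hasDerivWithinAt)
      (fun t ht => by rw [← NNReal.coe_le_coe, coe_nnnorm]; exact (hC t ht).trans (le_max_left _ _))
      |>.absolutelyContinuousOnInterval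
  have hH_ac := hh.absolutelyContinuousOnInterval_intervalIntegral (left_mem_uIcc (b := b))
  calc ∫ t in a..b, u t * h t = ∫ t in a..b, u t * deriv (fun x => ∫ s in a..x, h s) t := by
        apply intervalIntegral.integral_congr_ae
        filter_upwards [hh.ae_hasDerivAt_integral] with t ht ht'
        rw [(ht (uIoc_subset_uIcc ht') a left_mem_uIcc).deriv]
    _ = u b * (∫ t in a..b, h t) - ∫ t in a..b, deriv u t * ∫ s in a..t, h s := by
        simpa using hu_ac.integral_mul_deriv_eq_deriv_mul hH_ac
    _ = _ := by
        congr 1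
        exact intervalIntegral.integral_congr fun t ht => by simp only [(hu t ht).deriv]

theorem integral_exp_mul_sub_le {p q : ℝ → ℝ} {a b : ℝ} (hab : a ≤ b)
    (hp : ContinuousOn p (Icc a b)) (hq : ContinuousOn q (Icc a b)) :
    ∫ t in a..b, Real.exp (p t) * (q t - p t) ≤
      (∫ t in a..b, Real.exp (q t)) - ∫ t in a..b, Real.exp (p t) := by
  have hint : ∀ r : ℝ → ℝ, ContinuousOn r (Icc a b) → IntervalIntegrable r volume a b :=
    fun r hr => (uIcc_of_le hab ▸ hr).intervalIntegrable
  have hep := Real.continuous_exp.comp_continuousOn hp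
  have heq := Real.continuous_exp.comp_continuousOn hq
  rw [← intervalIntegral.integral_sub (hint (fun t => Real.exp (q t)) heq)
    (hint (fun t => Real.exp (p t)) hep)]
  refine intervalIntegral.integral_mono_on hab (hint _ (hep.mul (hq.sub hp)))
    (hint _ (heq.sub hep)) fun t _ => ?_
  have := Real.add_one_le_exp (q t - p t)
  rw [Real.exp_sub, le_div_iff₀ (Real.exp_pos _)] at this
  nlinarith [Real.exp_pos (p t)]

theorem IsAC.continuousOn {f g : ℝ → ℝ} (h : IsAC f g) : ContinuousOn f (Icc 0 1) := by
  have := intervalIntegral.continuousOn_primitive_interval' h.1 left_mem_uIcc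
  rw [uIcc_of_le zero_le_one] at this
  exact this.congr h.2.2

theorem energy_le_of_hasDerivAt_eq_mul_exp {ψ v f g : ℝ → ℝ} {c : ℝ} (hc : 0 ≤ c)
    (hψ : IsAC ψ v) (hv : ∀ t ∈ Icc (0:ℝ) 1, HasDerivAt v (c * Real.exp (ψ t)) t)
    (hv1 : v 1 = 0) (hfg : IsAC f g)
    (hf : ∫ t in (0:ℝ)..1, Real.exp (f t) = ∫ t in (0:ℝ)..1, Real.exp (ψ t)) :
    energy v ≤ energy g := by
  have hI : uIcc (0:ℝ) 1 = Icc 0 1 := uIcc_of_le zero_le_one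
  have hvc : ContinuousOn v (Icc 0 1) := fun t ht => (hv t ht).continuousAt.continuousWithinAt
  have hψc := hψ.continuousOn
  have hgv : IntervalIntegrable (fun t => g t - v t) volume 0 1 := hfg.1.sub hψ.1
  have hprim : ∀ t ∈ Icc (0:ℝ) 1, ∫ s in (0:ℝ)..t, (g s - v s) = f t - ψ t := by
    intro t ht
    have hsub : uIcc 0 t ⊆ uIcc (0:ℝ) 1 := uIcc_subset_uIcc_left (hI ▸ ht)
    rw [intervalIntegral.integral_sub (hfg.1.mono_set hsub) (hψ.1.mono_set hsub),
      hfg.2.2 t ht, hψ.2.2 t ht]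
  have hcross : 0 ≤ ∫ t in (0:ℝ)..1, v t * (g t - v t) := by
    rw [integral_mul_eq_sub_integral_deriv_mul_primitive (hI ▸ hv)
      (hI ▸ continuousOn_const.mul (Real.continuous_exp.comp_continuousOn hψc)) hgv,
      hv1, zero_mul, zero_sub, neg_nonneg]
    calc ∫ t in (0:ℝ)..1, c * Real.exp (ψ t) * ∫ s in (0:ℝ)..t, (g s - v s)
        = c * ∫ t in (0:ℝ)..1, Real.exp (ψ t) * (f t - ψ t) := by
          rw [← intervalIntegral.integral_const_mul]
          refine intervalIntegral.integral_congr fun t ht => ?_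
          simp only [hprim t (hI ▸ ht), mul_assoc]
      _ ≤ c * ((∫ t in (0:ℝ)..1, Real.exp (f t)) - ∫ t in (0:ℝ)..1, Real.exp (ψ t)) :=
          mul_le_mul_of_nonneg_left (integral_exp_mul_sub_le zero_le_one hψc hfg.continuousOn) hc
      _ = 0 := by rw [hf, sub_self, mul_zero]
  have hvgv : IntervalIntegrable (fun t => v t * (g t - v t)) volume 0 1 :=
    hgv.continuousOn_mul (hI ▸ hvc)
  unfold energy
  gcongr
  calc ∫ t in (0:ℝ)..1, v t ^ 2
        ≤ (∫ t in (0:ℝ)..1, v t ^ 2) + 2 * ∫ t in (0:ℝ)..1, v t * (g t - v t) := by linarith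
    _ = ∫ t in (0:ℝ)..1, (v t ^ 2 + 2 * (v t * (g t - v t))) := by
        rw [intervalIntegral.integral_add hψ.2.1 (hvgv.const_mul 2),
          intervalIntegral.integral_const_mul]
    _ ≤ ∫ t in (0:ℝ)..1, g t ^ 2 :=
        intervalIntegral.integral_mono_on zero_le_one (hψ.2.1.add (hvgv.const_mul 2)) hfg.2.1
          fun t _ => by nlinarith [sq_nonneg (g t - v t)]

namespace JBS

open Real

noncomputable def optimalPath (ξ : ℝ) (u : ℝ) : ℝ :=
  log (cos ξ ^ 2 / cos (ξ * (u - 1)) ^ 2)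

noncomputable def optimalPathDeriv (ξ : ℝ) (u : ℝ) : ℝ :=
  2 * ξ * tan (ξ * (u - 1))

variable {ξ u : ℝ}

theorem cos_pos (hξ : ξ ∈ Ioo 0 (π / 2)) : 0 < cos ξ :=
  cos_pos_of_mem_Ioo ⟨by linarith [hξ.1, pi_pos], hξ.2⟩

theorem cos_mul_sub_one_pos (hξ : ξ ∈ Ioo 0 (π / 2)) (hu : u ∈ Icc (0:ℝ) 1) :
    0 < cos (ξ * (u - 1)) := by
  obtain ⟨hξ0, hξ1⟩ := hξ
  apply cos_pos_of_mem_Ioo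
  constructor <;> nlinarith [hu.1, hu.2, pi_pos]

theorem hasDerivAt_mul_sub_one (ξ u : ℝ) : HasDerivAt (fun u : ℝ => ξ * (u - 1)) ξ u := by
  simpa using ((hasDerivAt_id u).sub_const 1).const_mul ξ

theorem optimalPath_zero (hξ : ξ ∈ Ioo 0 (π / 2)) : optimalPath ξ 0 = 0 := by
  rw [optimalPath, zero_sub, mul_neg_one, cos_neg, div_self (pow_pos (cos_pos hξ) 2).ne', log_one]

theorem exp_optimalPath (hξ : ξ ∈ Ioo 0 (π / 2)) (hu : u ∈ Icc (0:ℝ) 1) :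
    exp (optimalPath ξ u) = cos ξ ^ 2 / cos (ξ * (u - 1)) ^ 2 :=
  exp_log (div_pos (pow_pos (cos_pos hξ) 2) (pow_pos (cos_mul_sub_one_pos hξ hu) 2))

theorem hasDerivAt_optimalPath (hξ : ξ ∈ Ioo 0 (π / 2)) (hu : u ∈ Icc (0:ℝ) 1) :
    HasDerivAt (optimalPath ξ) (optimalPathDeriv ξ u) u := by
  have hc := cos_mul_sub_one_pos hξ hu
  have hξc := cos_pos hξ
  have hcos : HasDerivAt (fun u => cos (ξ * (u - 1))) (-sin (ξ * (u - 1)) * ξ) u :=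
    (hasDerivAt_cos _).comp u (hasDerivAt_mul_sub_one ξ u)
  refine (((hasDerivAt_const u (cos ξ ^ 2)).fun_div (hcos.fun_pow 2) (by positivity)).log
    (by positivity)).congr_deriv ?_
  rw [optimalPathDeriv, tan_eq_sin_div_cos]
  field_simp
  ring

theorem optimalPathDeriv_one : optimalPathDeriv ξ 1 = 0 := by
  simp [optimalPathDeriv]

theorem hasDerivAt_optimalPathDeriv (hu : cos (ξ * (u - 1)) ≠ 0) :
    HasDerivAt (optimalPathDeriv ξ) (2 * ξ ^ 2 / cos (ξ * (u - 1)) ^ 2) u := by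
  have h := ((hasDerivAt_tan hu).comp u (hasDerivAt_mul_sub_one ξ u)).const_mul (2 * ξ)
  exact h.congr_deriv (by field_simp)

theorem hasDerivAt_optimalPathDeriv_eq_mul_exp (hξ : ξ ∈ Ioo 0 (π / 2)) (hu : u ∈ Icc (0:ℝ) 1) :
    HasDerivAt (optimalPathDeriv ξ) (2 * ξ ^ 2 / cos ξ ^ 2 * exp (optimalPath ξ u)) u := by
  have hξc := cos_pos hξ
  refine (hasDerivAt_optimalPathDeriv (cos_mul_sub_one_pos hξ hu).ne').congr_deriv ?_
  rw [exp_optimalPath hξ hu]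
  field_simp

theorem continuousOn_optimalPathDeriv (hξ : ξ ∈ Ioo 0 (π / 2)) :
    ContinuousOn (optimalPathDeriv ξ) (Icc 0 1) := fun _ hu =>
  (hasDerivAt_optimalPathDeriv (cos_mul_sub_one_pos hξ hu).ne').continuousAt.continuousWithinAt

theorem isAC_optimalPath (hξ : ξ ∈ Ioo 0 (π / 2)) : IsAC (optimalPath ξ) (optimalPathDeriv ξ) := by
  have hI : uIcc (0:ℝ) 1 = Icc 0 1 := uIcc_of_le zero_le_one
  have hcont := continuousOn_optimalPathDeriv hξ
  refine ⟨(hI ▸ hcont).intervalIntegrable, (hI ▸ hcont.pow 2).intervalIntegrable,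
    fun t ht => ?_⟩
  have hsub : uIcc 0 t ⊆ Icc (0:ℝ) 1 := hI ▸ uIcc_subset_uIcc_left (hI ▸ ht)
  rw [intervalIntegral.integral_eq_sub_of_hasDerivAt
    (fun u hu => hasDerivAt_optimalPath hξ (hsub hu)) ((hcont.mono hsub).intervalIntegrable),
    optimalPath_zero hξ, sub_zero]

theorem integral_exp_optimalPath (hξ : ξ ∈ Ioo 0 (π / 2)) :
    ∫ u in (0:ℝ)..1, exp (optimalPath ξ u) = sin (2 * ξ) / (2 * ξ) := by
  have hI : uIcc (0:ℝ) 1 = Icc 0 1 := uIcc_of_le zero_le_one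
  have hcont : ContinuousOn (fun u => 2 * ξ ^ 2 / cos ξ ^ 2 * exp (optimalPath ξ u)) (Icc 0 1) :=
    continuousOn_const.mul (continuous_exp.comp_continuousOn (isAC_optimalPath hξ).continuousOn)
  have h := intervalIntegral.integral_eq_sub_of_hasDerivAt
    (fun u hu => hasDerivAt_optimalPathDeriv_eq_mul_exp hξ (hI ▸ hu))
    (hI ▸ hcont).intervalIntegrable
  have hv : optimalPathDeriv ξ 1 - optimalPathDeriv ξ 0 = 2 * ξ * tan ξ := by
    simp [optimalPathDeriv, tan_neg]
  rw [intervalIntegral.integral_const_mul, hv, tan_eq_sin_div_cos] at h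
  have hξ0 := hξ.1.ne'
  have hc := (cos_pos hξ).ne'
  rw [sin_two_mul]
  field_simp at h ⊢
  linear_combination h

theorem energy_optimalPathDeriv (hξ : ξ ∈ Ioo 0 (π / 2)) :
    energy (optimalPathDeriv ξ) = 2 * ξ * (tan ξ - ξ) := by
  have hI : uIcc (0:ℝ) 1 = Icc 0 1 := uIcc_of_le zero_le_one
  have hder : ∀ u ∈ uIcc (0:ℝ) 1, HasDerivAt (fun u => 2 * optimalPathDeriv ξ u - 4 * ξ ^ 2 * u)
      (optimalPathDeriv ξ u ^ 2) u := by
    intro u hu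
    have hc := (cos_mul_sub_one_pos hξ (hI ▸ hu)).ne'
    refine (((hasDerivAt_optimalPathDeriv hc).const_mul 2).sub
      ((hasDerivAt_id u).const_mul (4 * ξ ^ 2))).congr_deriv ?_
    rw [optimalPathDeriv, tan_eq_sin_div_cos]
    field_simp
    linear_combination (-4 * ξ ^ 2) * sin_sq_add_cos_sq (ξ * (u - 1))
  rw [energy, intervalIntegral.integral_eq_sub_of_hasDerivAt hder
    (hI ▸ (continuousOn_optimalPathDeriv hξ).pow 2).intervalIntegrable]
  simp only [optimalPathDeriv, sub_self, mul_zero, tan_zero, zero_sub, mul_neg_one, tan_neg]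
  ring

theorem energy_deriv_optimalPath (hξ : ξ ∈ Ioo 0 (π / 2)) :
    energy (deriv (optimalPath ξ)) = 2 * ξ * (tan ξ - ξ) := by
  rw [← energy_optimalPathDeriv hξ, energy, energy]
  congr 1
  refine intervalIntegral.integral_congr fun u hu => ?_
  rw [(hasDerivAt_optimalPath hξ (uIcc_of_le (zero_le_one (α := ℝ)) ▸ hu)).deriv]

theorem energy_optimalPathDeriv_le (hξ : ξ ∈ Ioo 0 (π / 2)) {f g : ℝ → ℝ} (hfg : IsAC f g)
    (hf : ∫ u in (0:ℝ)..1, exp (f u) = ∫ u in (0:ℝ)..1, exp (optimalPath ξ u)) :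
    energy (optimalPathDeriv ξ) ≤ energy g :=
  energy_le_of_hasDerivAt_eq_mul_exp (by positivity) (isAC_optimalPath hξ)
    (fun _ ht => hasDerivAt_optimalPathDeriv_eq_mul_exp hξ ht) optimalPathDeriv_one hfg hf

end JBS

theorem JBS_optimal_path_left_general (x ξ : ℝ)
    (hξ : ξ ∈ Ioo (0:ℝ) (Real.pi / 2))
    (heq : Real.sin (2 * ξ) / (2 * ξ) = x)
    (φ : ℝ → ℝ)
    (hφ : ∀ u, φ u = Real.log (Real.cos ξ ^ 2 / Real.cos (ξ * (u - 1)) ^ 2)) :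
    φ 0 = 0 ∧
    (∫ u in (0:ℝ)..1, Real.exp (φ u)) = x ∧
    (1 / 2) * (∫ u in (0:ℝ)..1, (deriv φ u) ^ 2) = 2 * ξ * (Real.tan ξ - ξ) ∧
    JBS x = 2 * ξ * (Real.tan ξ - ξ) := by
  obtain rfl : φ = JBS.optimalPath ξ := funext hφ
  have hx : ∫ u in (0:ℝ)..1, Real.exp (JBS.optimalPath ξ u) = x :=
    heq ▸ JBS.integral_exp_optimalPath hξ
  refine ⟨JBS.optimalPath_zero hξ, hx, JBS.energy_deriv_optimalPath hξ, ?_⟩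
  rw [← JBS.energy_optimalPathDeriv hξ]
  refine IsLeast.csInf_eq ⟨⟨_, _, JBS.isAC_optimalPath hξ, hx, rfl⟩, ?_⟩
  rintro _ ⟨f, g, hfg, hf, rfl⟩
  exact JBS.energy_optimalPathDeriv_le hξ hfg (hf.trans hx.symm)

/-- For `0 < x < 1` and `ξ ∈ (0, π/2)` with `sin(2ξ)/(2ξ) = x`, the path
`φ(u) = log(cos²(ξ)/cos²(ξ(u−1)))` satisfies `φ(0) = 0`, `∫₀¹ exp(φ(u)) du = x`, has
energy `2ξ(tan ξ − ξ)`, and attains the infimum defining `J_BS(x)`. -/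
theorem JBS_optimal_path_left (x ξ : ℝ) (hx0 : 0 < x) (hx1 : x < 1)
    (hξ : ξ ∈ Ioo (0:ℝ) (Real.pi / 2))
    (heq : Real.sin (2 * ξ) / (2 * ξ) = x)
    (φ : ℝ → ℝ)
    (hφ : ∀ u, φ u = Real.log (Real.cos ξ ^ 2 / Real.cos (ξ * (u - 1)) ^ 2)) :
    φ 0 = 0 ∧
    (∫ u in (0:ℝ)..1, Real.exp (φ u)) = x ∧
    (1 / 2) * (∫ u in (0:ℝ)..1, (deriv φ u) ^ 2) = 2 * ξ * (Real.tan ξ - ξ) ∧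
    JBS x = 2 * ξ * (Real.tan ξ - ξ) :=
  JBS_optimal_path_left_general x ξ hξ heq φ hφ
end

section
/- For every x > 1 and every τ ∈ (0,1), there exists a unique β ∈ (0,∞) such that sinh(β)/β = x·exp(−(τ/(1−τ))·β·tanh(β/2)). -/
open Real Set Filter

lemma tanh_strictMono : StrictMono Real.tanh := by
  intro a b hab
  rw [Real.tanh_eq_sinh_div_cosh, Real.tanh_eq_sinh_div_cosh,
    div_lt_div_iff₀ (Real.cosh_pos a) (Real.cosh_pos b)]
  have h : Real.sinh (a - b) < 0 := by
    simpa using Real.sinh_lt_sinh.2 (sub_neg.2 hab)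
  rw [Real.sinh_sub] at h
  linarith

lemma sinh_lt_mul_cosh {t : ℝ} (ht : 0 < t) : Real.sinh t < t * Real.cosh t := by
  have hmono : StrictMonoOn (fun y => y * Real.cosh y - Real.sinh y) (Ici 0) := by
    apply strictMonoOn_of_deriv_pos (convex_Ici _)
    · exact ((continuous_id.mul Real.continuous_cosh).sub Real.continuous_sinh).continuousOn
    · intro y hy
      rw [interior_Ici, mem_Ioi] at hy
      have hd : HasDerivAt (fun y => y * Real.cosh y - Real.sinh y)
          (1 * Real.cosh y + y * Real.sinh y - Real.cosh y) y :=
        ((hasDerivAt_id y).mul (Real.hasDerivAt_cosh y)).sub (Real.hasDerivAt_sinh y)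
      rw [hd.deriv]
      have : 0 < Real.sinh y := Real.sinh_pos_iff.2 hy
      nlinarith
  have := hmono (self_mem_Ici) (by simp [ht.le] : t ∈ Ici 0) ht
  simpa using this

lemma sinh_div_strictMonoOn : StrictMonoOn (fun y => Real.sinh y / y) (Ioi 0) := by
  apply strictMonoOn_of_deriv_pos (convex_Ioi _)
  · exact Real.continuous_sinh.continuousOn.div continuousOn_id
      (fun y hy => ne_of_gt hy)
  · intro y hy
    rw [interior_Ioi, mem_Ioi] at hy
    have hd : HasDerivAt (fun y => Real.sinh y / y)
        ((Real.cosh y * y - Real.sinh y * 1) / y ^ 2) y :=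
      (Real.hasDerivAt_sinh y).div (hasDerivAt_id y) hy.ne'
    rw [hd.deriv]
    have h1 : Real.sinh y < y * Real.cosh y := sinh_lt_mul_cosh hy
    have h2 : (0:ℝ) < y ^ 2 := by positivity
    apply div_pos (by nlinarith) h2

lemma tendsto_sinh_div_atTop : Tendsto (fun y => Real.sinh y / y) atTop atTop := by
  have h1 : Tendsto (fun y => Real.exp y / y) atTop atTop := by
    simpa using Real.tendsto_exp_div_pow_atTop 1
  have h2 : Tendsto (fun y => Real.exp y / y / 2 - 1/2) atTop atTop :=
    tendsto_atTop_add_const_right _ _ (h1.atTop_div_const two_pos)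
  apply tendsto_atTop_mono' _ _ h2
  filter_upwards [eventually_ge_atTop (1:ℝ)] with y hy
  have hy0 : (0:ℝ) < y := by linarith
  have hexp : Real.exp (-y) ≤ 1 := Real.exp_le_one_iff.2 (by linarith)
  have key : Real.exp (-y) ≤ y := le_trans hexp hy
  rw [Real.sinh_eq]
  have hA : Real.exp y / y / 2 * (2*y) = Real.exp y := by field_simp
  have hB : (Real.exp y - Real.exp (-y)) / 2 / y * (2*y) = Real.exp y - Real.exp (-y) := by
    field_simp
  nlinarith [hA, hB, key, hy0]

/-- For every `x > 1` and `τ ∈ (0,1)` there is a unique `β ∈ (0,∞)` with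
`sinh(β)/β = x·exp(−(τ/(1−τ))·β·tanh(β/2))`. -/
theorem exists_unique_beta (x τ : ℝ) (hx : 1 < x) (hτ : τ ∈ Set.Ioo (0:ℝ) 1) :
    ∃! β : ℝ, 0 < β ∧
      Real.sinh β / β = x * Real.exp (-(τ / (1 - τ)) * β * Real.tanh (β / 2)) := by
  obtain ⟨hτ0, hτ1⟩ := hτ
  set c : ℝ := τ / (1 - τ) with hc
  have hcpos : 0 < c := div_pos hτ0 (by linarith)
  set g : ℝ → ℝ := fun β => Real.sinh β / β * Real.exp (c * β * Real.tanh (β / 2)) with hg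
  -- the equation is equivalent to g β = x
  have hequiv : ∀ β : ℝ, 0 < β →
      ((Real.sinh β / β = x * Real.exp (-(τ / (1 - τ)) * β * Real.tanh (β / 2))) ↔ g β = x) := by
    intro β hβ
    rw [hg]
    have hE : Real.exp (-(c) * β * Real.tanh (β / 2)) =
        (Real.exp (c * β * Real.tanh (β / 2)))⁻¹ := by
      rw [← Real.exp_neg]; ring_nf
    constructor
    · intro h
      simp only
      rw [← hc] at h
      rw [h, hE]
      field_simp
    · intro h
      simp only at h
      rw [← hc, hE, ← h]
      field_simp
  -- tanh positivity and monotonicity facts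
  have htanh_pos : ∀ β : ℝ, 0 < β → 0 < Real.tanh (β / 2) := by
    intro β hβ
    have := tanh_strictMono (show (0:ℝ) < β/2 by linarith)
    simpa [Real.tanh_zero] using this
  -- g is strictly monotone on Ioi 0
  have hmono : StrictMonoOn g (Ioi 0) := by
    intro a ha b hb hab
    rw [mem_Ioi] at ha hb
    have h1 : Real.sinh a / a < Real.sinh b / b := sinh_div_strictMonoOn ha hb hab
    have h2 : Real.exp (c * a * Real.tanh (a / 2)) < Real.exp (c * b * Real.tanh (b / 2)) := by
      apply Real.exp_lt_exp.2
      have hta := htanh_pos a ha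
      have htb := tanh_strictMono (show a/2 < b/2 by linarith)
      have hprod : a * Real.tanh (a/2) < b * Real.tanh (b/2) :=
        mul_lt_mul'' hab htb ha.le hta.le
      calc c * a * Real.tanh (a/2) = c * (a * Real.tanh (a/2)) := by ring
        _ < c * (b * Real.tanh (b/2)) := mul_lt_mul_of_pos_left hprod hcpos
        _ = c * b * Real.tanh (b/2) := by ring
    have hpa : 0 < Real.sinh a / a := div_pos (Real.sinh_pos_iff.2 ha) ha
    have hpe : 0 < Real.exp (c * a * Real.tanh (a / 2)) := Real.exp_pos _
    calc g a = Real.sinh a / a * Real.exp (c * a * Real.tanh (a / 2)) := rfl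
      _ < Real.sinh b / b * Real.exp (c * b * Real.tanh (b / 2)) :=
          mul_lt_mul'' h1 h2 hpa.le hpe.le
      _ = g b := rfl
  -- continuity of g on Ioi 0
  have hcont : ContinuousOn g (Ioi 0) := by
    have ht : Continuous (fun β : ℝ => Real.tanh (β / 2)) := by
      have : (fun β : ℝ => Real.tanh (β / 2)) =
          fun β : ℝ => Real.sinh (β / 2) / Real.cosh (β / 2) := by
        funext β; rw [Real.tanh_eq_sinh_div_cosh]
      rw [this]
      exact (Real.continuous_sinh.comp (continuous_id.div_const 2)).div
        (Real.continuous_cosh.comp (continuous_id.div_const 2))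
        (fun y => (Real.cosh_pos _).ne')
    apply ContinuousOn.mul
    · exact Real.continuous_sinh.continuousOn.div continuousOn_id (fun y hy => ne_of_gt hy)
    · exact (Real.continuous_exp.comp
        ((continuous_const.mul continuous_id).mul ht)).continuousOn
  -- g tends to 1 as β → 0+
  have hlim0 : Tendsto g (nhdsWithin 0 (Ioi 0)) (nhds 1) := by
    have h1 : Tendsto (fun β => Real.sinh β / β) (nhdsWithin 0 (Ioi 0)) (nhds 1) := by
      have hsl := hasDerivAt_iff_tendsto_slope.mp (Real.hasDerivAt_sinh 0)
      have h2 : Tendsto (slope Real.sinh 0) (nhdsWithin 0 (Ioi 0)) (nhds (Real.cosh 0)) :=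
        hsl.mono_left (nhdsWithin_mono _ (fun y hy => ne_of_gt hy))
      rw [Real.cosh_zero] at h2
      apply h2.congr
      intro y
      simp [slope_def_field]
    have h2 : Tendsto (fun β : ℝ => Real.exp (c * β * Real.tanh (β / 2)))
        (nhdsWithin 0 (Ioi 0)) (nhds 1) := by
      have hcontE : Continuous (fun β : ℝ => Real.exp (c * β * Real.tanh (β / 2))) := by
        have ht : Continuous (fun β : ℝ => Real.tanh (β / 2)) := by
          have : (fun β : ℝ => Real.tanh (β / 2)) =
              fun β : ℝ => Real.sinh (β / 2) / Real.cosh (β / 2) := by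
            funext β; rw [Real.tanh_eq_sinh_div_cosh]
          rw [this]
          exact (Real.continuous_sinh.comp (continuous_id.div_const 2)).div
            (Real.continuous_cosh.comp (continuous_id.div_const 2))
            (fun y => (Real.cosh_pos _).ne')
        exact Real.continuous_exp.comp ((continuous_const.mul continuous_id).mul ht)
      have := (hcontE.tendsto 0).mono_left (nhdsWithin_le_nhds (s := Ioi (0:ℝ)))
      simpa using this
    have := h1.mul h2
    simpa using this
  -- find a with g a < x
  have hx' : (1:ℝ) < x := hx
  have hev : ∀ᶠ β in nhdsWithin 0 (Ioi 0), g β < x :=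
    hlim0.eventually (Filter.Tendsto.eventually_lt_const hx' tendsto_id) |>.mono (fun y hy => hy)
  obtain ⟨a, ha_mem, ha⟩ : ∃ a, a ∈ Ioi (0:ℝ) ∧ g a < x := by
    have : (nhdsWithin (0:ℝ) (Ioi 0)).NeBot := nhdsGT_neBot 0
    rcases (hev.and self_mem_nhdsWithin).exists with ⟨a, h1, h2⟩
    exact ⟨a, h2, h1⟩
  -- find b with x ≤ g b
  obtain ⟨b, hb_mem, hb⟩ : ∃ b, b ∈ Ioi (0:ℝ) ∧ x ≤ g b := by
    rcases ((tendsto_sinh_div_atTop.eventually_ge_atTop x).and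
      (eventually_ge_atTop (1:ℝ))).exists with ⟨b, h1, h2⟩
    have hb0 : (0:ℝ) < b := by linarith
    refine ⟨b, hb0, ?_⟩
    have hE : 1 ≤ Real.exp (c * b * Real.tanh (b / 2)) := by
      rw [Real.one_le_exp_iff]
      have := htanh_pos b hb0
      positivity
    calc x ≤ Real.sinh b / b := h1
      _ = Real.sinh b / b * 1 := by ring
      _ ≤ Real.sinh b / b * Real.exp (c * b * Real.tanh (b / 2)) := by
          apply mul_le_mul_of_nonneg_left hE
          exact (div_pos (Real.sinh_pos_iff.2 hb0) hb0).le
  -- a < b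
  have hab : a < b := by
    by_contra h
    push_neg at h
    rcases eq_or_lt_of_le h with h | h
    · rw [h] at hb; linarith
    · have := hmono hb_mem ha_mem h; linarith
  -- IVT
  have hsub : Icc a b ⊆ Ioi 0 := fun y hy => lt_of_lt_of_le ha_mem hy.1
  have hIVT : x ∈ g '' Icc a b := by
    apply intermediate_value_Icc hab.le (hcont.mono hsub)
    exact ⟨ha.le, hb⟩
  obtain ⟨β, hβmem, hβeq⟩ := hIVT
  have hβpos : 0 < β := hsub hβmem
  refine ⟨β, ⟨hβpos, (hequiv β hβpos).2 hβeq⟩, ?_⟩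
  rintro y ⟨hy0, hyeq⟩
  have hgy : g y = x := (hequiv y hy0).1 hyeq
  exact hmono.injOn hy0 hβpos (by rw [hgy, hβeq])
end

section
/- For every x with 0 < x < 1 and every τ ∈ (0,1), there exists a unique ξ ∈ (0, π/2) such that sin(2ξ)/(2ξ) = x·exp((2τ/(1−τ))·ξ·tan(ξ)). -/
open Real Set Filter

/-- sin y / y is strictly decreasing on (0, π). -/
lemma sinc_strictAntiOn : StrictAntiOn (fun y : ℝ => Real.sin y / y) (Set.Ioo 0 Real.pi) := by
  apply strictAntiOn_of_deriv_neg (convex_Ioo 0 Real.pi)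
  · exact Real.continuous_sin.continuousOn.div continuousOn_id
      (fun y hy => ne_of_gt hy.1)
  · intro y hy
    rw [interior_Ioo] at hy
    have hy0 : (y:ℝ) ≠ 0 := ne_of_gt hy.1
    have hd : HasDerivAt (fun y : ℝ => Real.sin y / y)
        ((Real.cos y * y - Real.sin y * 1) / y ^ 2) y :=
      (Real.hasDerivAt_sin y).div (hasDerivAt_id y) hy0
    rw [hd.deriv]
    have hnum : Real.cos y * y - Real.sin y * 1 < 0 := by
      rcases lt_or_ge y (Real.pi / 2) with h | h
      · have hcos : 0 < Real.cos y := Real.cos_pos_of_mem_Ioo ⟨by linarith [hy.1], h⟩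
        have := Real.lt_tan hy.1 h
        rw [Real.tan_eq_sin_div_cos, lt_div_iff₀ hcos] at this
        nlinarith
      · have hcos : Real.cos y ≤ 0 := Real.cos_nonpos_of_pi_div_two_le_of_le h (by linarith [hy.2])
        have hsin : 0 < Real.sin y := Real.sin_pos_of_pos_of_lt_pi hy.1 hy.2
        nlinarith [hy.1, mul_nonpos_of_nonpos_of_nonneg hcos (le_of_lt hy.1)]
    exact div_neg_of_neg_of_pos hnum (by positivity)

/-- For every `0 < x < 1` and `τ ∈ (0,1)` there is a unique `ξ ∈ (0, π/2)`
with `sin(2ξ)/(2ξ) = x·exp((2τ/(1−τ))·ξ·tan(ξ))`. -/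
theorem exists_unique_xi (x τ : ℝ) (hx0 : 0 < x) (hx1 : x < 1) (hτ : τ ∈ Set.Ioo (0:ℝ) 1) :
    ∃! ξ : ℝ, ξ ∈ Set.Ioo (0:ℝ) (Real.pi / 2) ∧
      Real.sin (2 * ξ) / (2 * ξ) = x * Real.exp ((2 * τ / (1 - τ)) * ξ * Real.tan ξ) := by
  obtain ⟨hτ0, hτ1⟩ := hτ
  set c : ℝ := 2 * τ / (1 - τ) with hc_def
  have hc : 0 < c := div_pos (by linarith) (by linarith)
  have hpi := Real.pi_pos
  set S : Set ℝ := Set.Ioo (0:ℝ) (Real.pi / 2) with hS_def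
  set f : ℝ → ℝ := fun ξ => Real.sin (2 * ξ) / (2 * ξ) * Real.exp (-(c * ξ * Real.tan ξ))
    with hf_def
  -- positivity facts on S
  have hcosne : ∀ ξ ∈ S, Real.cos ξ ≠ 0 := fun ξ hξ =>
    ne_of_gt (Real.cos_pos_of_mem_Ioo ⟨by linarith [hξ.1], hξ.2⟩)
  have hgpos : ∀ ξ ∈ S, 0 < Real.sin (2 * ξ) / (2 * ξ) := by
    intro ξ hξ
    have h1 : 0 < Real.sin (2 * ξ) :=
      Real.sin_pos_of_pos_of_lt_pi (by linarith [hξ.1]) (by linarith [hξ.2])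
    exact div_pos h1 (by linarith [hξ.1])
  -- the equation is equivalent to f ξ = x
  have hequiv : ∀ ξ ∈ S,
      (Real.sin (2 * ξ) / (2 * ξ) = x * Real.exp (c * ξ * Real.tan ξ)) ↔ f ξ = x := by
    intro ξ hξ
    have hE : Real.exp (c * ξ * Real.tan ξ) ≠ 0 := Real.exp_ne_zero _
    rw [hf_def]
    simp only [Real.exp_neg]
    constructor
    · intro h
      rw [h]
      field_simp
    · intro h
      rw [← h, mul_assoc, inv_mul_cancel₀ hE, mul_one]
  -- f is strictly decreasing on S
  have hanti : StrictAntiOn f S := by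
    intro a ha b hb hab
    have hga : 0 < Real.sin (2 * a) / (2 * a) := hgpos a ha
    have hgb : 0 < Real.sin (2 * b) / (2 * b) := hgpos b hb
    have hg : Real.sin (2 * b) / (2 * b) < Real.sin (2 * a) / (2 * a) :=
      sinc_strictAntiOn ⟨by linarith [ha.1], by linarith [ha.2]⟩
        ⟨by linarith [hb.1], by linarith [hb.2]⟩ (by linarith)
    have hta : 0 < Real.tan a := Real.tan_pos_of_pos_of_lt_pi_div_two ha.1 ha.2
    have htab : Real.tan a < Real.tan b :=
      Real.tan_lt_tan_of_nonneg_of_lt_pi_div_two (le_of_lt ha.1) hb.2 hab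
    have hmul : c * a * Real.tan a < c * b * Real.tan b := by
      have : a * Real.tan a < b * Real.tan b := by nlinarith [ha.1]
      have := mul_lt_mul_of_pos_left this hc
      nlinarith
    have he : Real.exp (-(c * b * Real.tan b)) < Real.exp (-(c * a * Real.tan a)) :=
      Real.exp_lt_exp.2 (by linarith)
    have hepos : 0 < Real.exp (-(c * b * Real.tan b)) := Real.exp_pos _
    calc f b = Real.sin (2 * b) / (2 * b) * Real.exp (-(c * b * Real.tan b)) := rfl
      _ < Real.sin (2 * a) / (2 * a) * Real.exp (-(c * a * Real.tan a)) :=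
        mul_lt_mul'' hg he (le_of_lt hgb) (le_of_lt hepos)
      _ = f a := rfl
  -- f tends to 1 as ξ → 0⁺
  have hlim1 : Tendsto f (nhdsWithin 0 (Set.Ioi 0)) (nhds 1) := by
    have hslope : Tendsto (fun y : ℝ => Real.sin y / y) (nhdsWithin 0 {(0:ℝ)}ᶜ) (nhds 1) := by
      have := hasDerivAt_iff_tendsto_slope.1 (Real.hasDerivAt_sin 0)
      rw [Real.cos_zero] at this
      refine this.congr' ?_
      filter_upwards [self_mem_nhdsWithin] with y hy
      simp [slope, hy, Real.sin_zero, div_eq_inv_mul]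
    have hdouble : Tendsto (fun ξ : ℝ => 2 * ξ) (nhdsWithin 0 (Set.Ioi 0))
        (nhdsWithin 0 {(0:ℝ)}ᶜ) := by
      apply tendsto_nhdsWithin_of_tendsto_nhds_of_eventually_within
      · have : Tendsto (fun ξ : ℝ => 2 * ξ) (nhds 0) (nhds (2 * 0)) :=
          (continuous_const.mul continuous_id).tendsto 0
        simpa using this.mono_left nhdsWithin_le_nhds
      · filter_upwards [self_mem_nhdsWithin] with ξ (hξ : 0 < ξ)
        simp only [Set.mem_compl_iff, Set.mem_singleton_iff]
        positivity
    have hg : Tendsto (fun ξ : ℝ => Real.sin (2 * ξ) / (2 * ξ))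
        (nhdsWithin 0 (Set.Ioi 0)) (nhds 1) := hslope.comp hdouble
    have he : Tendsto (fun ξ : ℝ => Real.exp (-(c * ξ * Real.tan ξ)))
        (nhdsWithin 0 (Set.Ioi 0)) (nhds 1) := by
      have hcont : ContinuousAt (fun ξ : ℝ => Real.exp (-(c * ξ * Real.tan ξ))) 0 := by
        have htan : ContinuousAt Real.tan 0 := Real.continuousAt_tan.2 (by simp)
        exact Real.continuous_exp.continuousAt.comp
          (((continuousAt_const.mul continuousAt_id).mul htan).neg)
      have := hcont.tendsto.mono_left (nhdsWithin_le_nhds (s := Set.Ioi (0:ℝ)))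
      simpa using this
    have := hg.mul he
    simpa using this
  -- choose a with f a > x
  have hIoo_mem : S ∈ nhdsWithin (0:ℝ) (Set.Ioi 0) := Ioo_mem_nhdsGT_of_mem ⟨le_refl _, by linarith⟩
  have hev1 : ∀ᶠ ξ in nhdsWithin (0:ℝ) (Set.Ioi 0), x < f ξ :=
    hlim1.eventually (eventually_gt_nhds hx1)
  obtain ⟨a, ha1, ha2⟩ := (hev1.and (eventually_of_mem hIoo_mem (fun ξ hξ => hξ))).exists
  -- choose b with f b < x
  have hlim0 : Tendsto (fun ξ : ℝ => Real.sin (2 * ξ) / (2 * ξ))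
      (nhds (Real.pi / 2)) (nhds 0) := by
    have hcont : ContinuousAt (fun ξ : ℝ => Real.sin (2 * ξ) / (2 * ξ)) (Real.pi / 2) := by
      apply ContinuousAt.div
      · exact (Real.continuous_sin.comp (continuous_const.mul continuous_id)).continuousAt
      · exact (continuous_const.mul continuous_id).continuousAt
      · simp
    have := hcont.tendsto
    simpa [mul_div_cancel₀, Real.sin_pi, ne_of_gt hpi] using this
  have hev0 : ∀ᶠ ξ in nhdsWithin (Real.pi / 2) (Set.Iio (Real.pi / 2)),
      Real.sin (2 * ξ) / (2 * ξ) < x :=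
    (hlim0.mono_left nhdsWithin_le_nhds).eventually (eventually_lt_nhds hx0)
  have hIoo_mem' : S ∈ nhdsWithin (Real.pi / 2) (Set.Iio (Real.pi / 2)) :=
    Ioo_mem_nhdsLT_of_mem ⟨by linarith, le_refl _⟩
  obtain ⟨b, hb1, hb2⟩ := (hev0.and (eventually_of_mem hIoo_mem' (fun ξ hξ => hξ))).exists
  have hfb : f b < x := by
    have he1 : Real.exp (-(c * b * Real.tan b)) ≤ 1 := by
      rw [Real.exp_le_one_iff]
      have htb : 0 < Real.tan b := Real.tan_pos_of_pos_of_lt_pi_div_two hb2.1 hb2.2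
      have : 0 < c * b * Real.tan b := mul_pos (mul_pos hc hb2.1) htb
      linarith
    have hgbpos := hgpos b hb2
    calc f b ≤ Real.sin (2 * b) / (2 * b) * 1 :=
          mul_le_mul_of_nonneg_left he1 (le_of_lt hgbpos)
      _ = Real.sin (2 * b) / (2 * b) := mul_one _
      _ < x := hb1
  -- a < b
  have hab : a < b := by
    rcases lt_trichotomy a b with h | h | h
    · exact h
    · exfalso; rw [h] at ha1; linarith
    · exfalso; have := hanti hb2 ha2 h; linarith
  -- continuity of f on [a, b]
  have hsub : Set.Icc a b ⊆ S := fun ξ hξ => ⟨lt_of_lt_of_le ha2.1 hξ.1, lt_of_le_of_lt hξ.2 hb2.2⟩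
  have hcontf : ContinuousOn f (Set.Icc a b) := by
    apply ContinuousOn.mul
    · apply ContinuousOn.div
      · exact (Real.continuous_sin.comp (continuous_const.mul continuous_id)).continuousOn
      · exact (continuous_const.mul continuous_id).continuousOn
      · intro ξ hξ
        have := (hsub hξ).1
        positivity
    · apply ContinuousOn.rexp
      apply ContinuousOn.neg
      apply ContinuousOn.mul
      · exact (continuous_const.mul continuous_id).continuousOn
      · exact Real.continuousOn_tan.mono (fun ξ hξ => hcosne ξ (hsub hξ))
  -- IVT
  have hx_mem : x ∈ Set.Icc (f b) (f a) := ⟨le_of_lt hfb, le_of_lt ha1⟩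
  obtain ⟨ξ, hξmem, hξeq⟩ := intermediate_value_Icc' (le_of_lt hab) hcontf hx_mem
  have hξS : ξ ∈ S := hsub hξmem
  refine ⟨ξ, ⟨hξS, (hequiv ξ hξS).2 hξeq⟩, ?_⟩
  rintro ζ ⟨hζS, hζeq⟩
  exact hanti.injOn hζS hξS (by rw [(hequiv ζ hζS).1 hζeq, hξeq])
end
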